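/- arXiv:math/9801048 — 5 statements merged into one kernel-verified Lean document; each statement's English description precedes it below -/
import Mathlib

section
/- Let r ≥ 2 be an integer, ζ = exp(2πi/r), and let f be the monomial arrangement 𝒜(r,r,3): the 3r forms f((i,j),k) = x_i − ζ^k x_j on ℂ³ indexed by (i,j) ∈ {(1,2),(1,3),(2,3)} and k ∈ ZMod r. Let v₁ = Σ_{k ∈ ZMod r} (e((1,2),k) − e((2,3),k)) and v₂ = Σ_{k ∈ ZMod r} (e((1,3),k) − e((2,3),k)), where e(u) denotes the standard basis vector at index u. Then the span of {v₁, v₂} is 2-dimensional and is contained in the first cohomology support locus: Submodule.span ℂ {v₁, v₂} ⊆ R1_1(f). (This is the essential component of the first characteristic variety of 𝒜(r,r,3), arising from the neighborly partition of the hyperplanes into the three families.) -/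
/-!
Write `w_a = ∑ₖ e(a,k)`, so that `v₁ = w₀ - w₂` and `v₂ = w₁ - w₂`. Then
`v₁ ∧ v₂ = w₀ w₁ - w₀ w₂ + w₁ w₂`, and after reindexing this is the sum, over all
`k, m ∈ ZMod r`, of the Orlik–Solomon relations `∂(e_{(0,k)} e_{(1,m)} e_{(2,m-k)})`.
Each of these triples of hyperplanes is dependent because `ζ^k ζ^(m-k) = ζ^m`, so
`v₁ ∧ v₂ ∈ I₂(f)`. Every `λ ∧ η` with `λ, η ∈ span {v₁, v₂}` is a multiple of
`v₁ ∧ v₂`, hence `span {v₁, v₂} ⊆ K(λ)` for each `λ` in it, and `dim K(λ) ≥ 2`.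
-/

noncomputable section

open Module

/-- Degree-2 part of the Orlik–Solomon ideal (span over pairwise distinct triples
with linearly dependent forms; this agrees with the span over ordered triples
`i < j < k` since the spanning element is alternating in `(i,j,k)`). -/
def osI2 {I : Type*} [DecidableEq I] {ℓ : ℕ}
    (f : I → ((Fin ℓ → ℂ) →ₗ[ℂ] ℂ)) :
    Submodule ℂ (ExteriorAlgebra ℂ (I → ℂ)) :=
  Submodule.span ℂ
    { x | ∃ i j k : I, i ≠ j ∧ i ≠ k ∧ j ≠ k ∧
        ¬ LinearIndependent ℂ ![f i, f j, f k] ∧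
        x = ExteriorAlgebra.ι ℂ (Pi.single j 1 : I → ℂ) *
              ExteriorAlgebra.ι ℂ (Pi.single k 1 : I → ℂ)
          - ExteriorAlgebra.ι ℂ (Pi.single i 1 : I → ℂ) *
              ExteriorAlgebra.ι ℂ (Pi.single k 1 : I → ℂ)
          + ExteriorAlgebra.ι ℂ (Pi.single i 1 : I → ℂ) *
              ExteriorAlgebra.ι ℂ (Pi.single j 1 : I → ℂ) }

/-- `K(λ) = {η | ω(λ) ∧ ω(η) ∈ I₂(f)}`. -/
def osK {I : Type*} [DecidableEq I] {ℓ : ℕ}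
    (f : I → ((Fin ℓ → ℂ) →ₗ[ℂ] ℂ)) (lam : I → ℂ) :
    Submodule ℂ (I → ℂ) :=
  (osI2 f).comap
    ((LinearMap.mulLeft ℂ (ExteriorAlgebra.ι ℂ lam)).comp (ExteriorAlgebra.ι ℂ))

/-- The `k`-th cohomology support locus of the Orlik–Solomon algebra of `f`. -/
def osR1 {I : Type*} [Fintype I] [DecidableEq I] {ℓ : ℕ}
    (f : I → ((Fin ℓ → ℂ) →ₗ[ℂ] ℂ)) (k : ℕ) : Set (I → ℂ) :=
  { lam | letI := Classical.dec (lam = 0);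
      k ≤ finrank ℂ (osK f lam) - (if lam = 0 then 0 else 1) }

open ExteriorAlgebra

section ExteriorSquare

variable {R M : Type*} [CommRing R] [AddCommGroup M] [Module R M]

theorem ExteriorAlgebra.ι_mul_ι_swap (x y : M) : ι R x * ι R y = -(ι R y * ι R x) :=
  eq_neg_of_add_eq_zero_left (ι_add_mul_swap x y)

theorem ExteriorAlgebra.ι_mul_ι_mem_span_singleton_of_mem_span_pair {v₁ v₂ x y : M}
    (hx : x ∈ Submodule.span R {v₁, v₂}) (hy : y ∈ Submodule.span R {v₁, v₂}) :
    ι R x * ι R y ∈ R ∙ (ι R v₁ * ι R v₂) := by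
  obtain ⟨a, b, rfl⟩ := Submodule.mem_span_pair.1 hx
  obtain ⟨c, d, rfl⟩ := Submodule.mem_span_pair.1 hy
  refine Submodule.mem_span_singleton.2 ⟨a * d - b * c, ?_⟩
  simp only [map_add, map_smul, add_mul, mul_add, smul_mul_smul_comm, ι_sq_zero,
    ι_mul_ι_swap v₂ v₁]
  module

end ExteriorSquare

section SupportLocus

variable {I : Type*} [DecidableEq I] {ℓ : ℕ} {f : I → ((Fin ℓ → ℂ) →ₗ[ℂ] ℂ)}

theorem span_pair_le_osK {v₁ v₂ lam : I → ℂ} (h : ι ℂ v₁ * ι ℂ v₂ ∈ osI2 f)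
    (hlam : lam ∈ Submodule.span ℂ {v₁, v₂}) : Submodule.span ℂ {v₁, v₂} ≤ osK f lam :=
  fun _ hu => (Submodule.span_singleton_le_iff_mem _ _).2 h
    (ι_mul_ι_mem_span_singleton_of_mem_span_pair hlam hu)

theorem subset_osR1_of_le_osK [Fintype I] {W : Submodule ℂ (I → ℂ)} {k : ℕ}
    (hW : k + 1 ≤ finrank ℂ W) (hK : ∀ lam ∈ W, W ≤ osK f lam) : (W : Set (I → ℂ)) ⊆ osR1 f k := by
  intro lam hlam
  have := Submodule.finrank_mono (hK lam hlam)
  simp only [osR1, Set.mem_ofPred_eq]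
  split_ifs <;> omega

end SupportLocus

/-- The Orlik–Solomon boundary `∂(e_i e_j e_k)`. -/
def osRelation (R : Type*) [CommRing R] {I : Type*} [DecidableEq I] (i j k : I) :
    ExteriorAlgebra R (I → R) :=
  ι R (Pi.single j 1) * ι R (Pi.single k 1) - ι R (Pi.single i 1) * ι R (Pi.single k 1)
    + ι R (Pi.single i 1) * ι R (Pi.single j 1)

theorem osRelation_mem_osI2 {I : Type*} [DecidableEq I] {ℓ : ℕ}
    {f : I → ((Fin ℓ → ℂ) →ₗ[ℂ] ℂ)} {i j k : I} (hij : i ≠ j) (hik : i ≠ k) (hjk : j ≠ k)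
    (hdep : ¬ LinearIndependent ℂ ![f i, f j, f k]) : osRelation ℂ i j k ∈ osI2 f :=
  Submodule.subset_span ⟨i, j, k, hij, hik, hjk, hdep, rfl⟩

section EssentialPair

variable {R G : Type*} [CommRing R] [AddCommGroup G] [Fintype G] [DecidableEq G]

theorem ι_mul_ι_essentialPair_eq_sum_osRelation :
    ι R (∑ k : G, (Pi.single ((0 : Fin 3), k) 1 - Pi.single ((2 : Fin 3), k) 1 : Fin 3 × G → R)) *
      ι R (∑ k : G, (Pi.single ((1 : Fin 3), k) 1 - Pi.single ((2 : Fin 3), k) 1 :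
        Fin 3 × G → R)) =
    ∑ k : G, ∑ m : G, osRelation R ((0 : Fin 3), k) ((1 : Fin 3), m) ((2 : Fin 3), m - k) := by
  set e : Fin 3 → G → ExteriorAlgebra R (Fin 3 × G → R) := fun a k => ι R (Pi.single (a, k) 1)
  set w : Fin 3 → ExteriorAlgebra R (Fin 3 × G → R) :=
    fun a => ι R (∑ k : G, (Pi.single (a, k) 1 : Fin 3 × G → R))
  have hw (a : Fin 3) : ∑ k, e a k = w a := (map_sum _ _ _).symm
  have h12 : ∑ k, ∑ m, e 1 m * e 2 (m - k) = w 1 * w 2 := by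
    rw [Finset.sum_comm, ← hw, ← hw, Finset.sum_mul_sum]
    exact Finset.sum_congr rfl fun m _ => (Equiv.subLeft m).sum_comp (fun n => e 1 m * e 2 n)
  have h02 : ∑ k, ∑ m, e 0 k * e 2 (m - k) = w 0 * w 2 := by
    rw [← hw, ← hw, Finset.sum_mul_sum]
    exact Finset.sum_congr rfl fun k _ => (Equiv.subRight k).sum_comp (fun n => e 0 k * e 2 n)
  have h01 : ∑ k, ∑ m, e 0 k * e 1 m = w 0 * w 1 := by
    rw [← hw, ← hw, Finset.sum_mul_sum]
  have h22 : w 2 * w 2 = 0 := ι_sq_zero _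
  have h21 : w 2 * w 1 = -(w 1 * w 2) := ι_mul_ι_swap _ _
  simp only [osRelation, Finset.sum_add_distrib, Finset.sum_sub_distrib, map_sub]
  change (w 0 - w 2) * (w 1 - w 2) = _
  rw [h12, h02, h01, sub_mul, mul_sub, mul_sub, h22, h21]
  abel

end EssentialPair

theorem linearIndependent_essentialPair {K G : Type*} [Field K] [Fintype G] [DecidableEq G]
    [Nonempty G] :
    LinearIndependent K
      ![∑ k : G, (Pi.single ((0 : Fin 3), k) 1 - Pi.single ((2 : Fin 3), k) 1 : Fin 3 × G → K),
        ∑ k : G, (Pi.single ((1 : Fin 3), k) 1 - Pi.single ((2 : Fin 3), k) 1)] := by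
  obtain ⟨g⟩ := ‹Nonempty G›
  refine LinearIndependent.pair_iff.2 fun s t hst => ⟨?_, ?_⟩
  · simpa [Pi.single_apply] using congrFun hst ((0 : Fin 3), g)
  · simpa [Pi.single_apply] using congrFun hst ((1 : Fin 3), g)

theorem pow_val_add_of_pow_eq_one {M : Type*} [Monoid M] {r : ℕ} [NeZero r] {ζ : M}
    (hζ : ζ ^ r = 1) (a b : ZMod r) : ζ ^ (a + b).val = ζ ^ a.val * ζ ^ b.val := by
  rw [← pow_add, ZMod.val_add, ← pow_eq_pow_mod _ hζ]

theorem not_linearIndependent_proj_sub {K : Type*} [CommRing K] [Nontrivial K] (a c : K) :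
    ¬ LinearIndependent K
      ![(LinearMap.proj 0 : (Fin 3 → K) →ₗ[K] K) - a • LinearMap.proj 1,
        LinearMap.proj 0 - (a * c) • LinearMap.proj 2,
        LinearMap.proj 1 - c • LinearMap.proj 2] := by
  rw [Fintype.not_linearIndependent_iff]
  refine ⟨![1, -1, a], ?_, 0, one_ne_zero⟩
  simp only [Fin.sum_univ_three, Matrix.cons_val_zero, Matrix.cons_val_one, Matrix.cons_val_two,
    Matrix.head_cons, Matrix.tail_cons]
  module

theorem essential_torus_monomial_rr3_general (r : ℕ) [NeZero r]
    (ζ : ℂ) (hζ : ζ = Complex.exp (2 * Real.pi * Complex.I / r))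
    (f : Fin 3 × ZMod r → ((Fin 3 → ℂ) →ₗ[ℂ] ℂ))
    (hf : ∀ k : ZMod r,
      f (0, k) = (LinearMap.proj 0 : (Fin 3 → ℂ) →ₗ[ℂ] ℂ) -
        ζ ^ k.val • LinearMap.proj 1 ∧
      f (1, k) = (LinearMap.proj 0 : (Fin 3 → ℂ) →ₗ[ℂ] ℂ) -
        ζ ^ k.val • LinearMap.proj 2 ∧
      f (2, k) = (LinearMap.proj 1 : (Fin 3 → ℂ) →ₗ[ℂ] ℂ) -
        ζ ^ k.val • LinearMap.proj 2)
    (v₁ v₂ : Fin 3 × ZMod r → ℂ)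
    (hv₁ : v₁ = ∑ k : ZMod r,
      ((Pi.single ((0 : Fin 3), k) 1 : Fin 3 × ZMod r → ℂ) -
        Pi.single ((2 : Fin 3), k) 1))
    (hv₂ : v₂ = ∑ k : ZMod r,
      ((Pi.single ((1 : Fin 3), k) 1 : Fin 3 × ZMod r → ℂ) -
        Pi.single ((2 : Fin 3), k) 1)) :
    finrank ℂ (Submodule.span ℂ {v₁, v₂}) = 2 ∧
      (Submodule.span ℂ {v₁, v₂} : Set (Fin 3 × ZMod r → ℂ)) ⊆ osR1 f 1 := by
  have hζr : ζ ^ r = 1 := hζ ▸ (Complex.isPrimitiveRoot_exp r (NeZero.ne r)).pow_eq_one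
  have hdep (k m : ZMod r) : ¬ LinearIndependent ℂ ![f (0, k), f (1, m), f (2, m - k)] := by
    have hmul : ζ ^ m.val = ζ ^ k.val * ζ ^ (m - k).val := by
      rw [← pow_val_add_of_pow_eq_one hζr, add_sub_cancel]
    rw [(hf k).1, (hf m).2.1, (hf (m - k)).2.2, hmul]
    exact not_linearIndependent_proj_sub _ _
  have hwedge : ι ℂ v₁ * ι ℂ v₂ ∈ osI2 f := by
    rw [hv₁, hv₂, ι_mul_ι_essentialPair_eq_sum_osRelation]
    exact Submodule.sum_mem _ fun k _ => Submodule.sum_mem _ fun m _ =>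
      osRelation_mem_osI2 (by simp) (by simp) (by simp) (hdep k m)
  have hrank : finrank ℂ (Submodule.span ℂ {v₁, v₂}) = 2 := by
    rw [← Matrix.range_cons_cons_empty v₁ v₂ ![], finrank_span_eq_card
      (hv₁ ▸ hv₂ ▸ linearIndependent_essentialPair), Fintype.card_fin]
  exact ⟨hrank, subset_osR1_of_le_osK hrank.ge fun _ hlam => span_pair_le_osK hwedge hlam⟩

/-- The essential component of the first characteristic variety of `𝒜(r,r,3)`:
the span of `v₁ = ∑ₖ (e((1,2),k) − e((2,3),k))` and `v₂ = ∑ₖ (e((1,3),k) − e((2,3),k))`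
is a 2-dimensional subspace contained in `R¹₁(f)`.  The index set of the
arrangement is `Fin 3 × ZMod r`, where `0, 1, 2` correspond to
`(1,2), (1,3), (2,3)`. -/
theorem essential_torus_monomial_rr3 (r : ℕ) [NeZero r] (hr : 2 ≤ r)
    (ζ : ℂ) (hζ : ζ = Complex.exp (2 * Real.pi * Complex.I / r))
    (f : Fin 3 × ZMod r → ((Fin 3 → ℂ) →ₗ[ℂ] ℂ))
    (hf : ∀ k : ZMod r,
      f (0, k) = (LinearMap.proj 0 : (Fin 3 → ℂ) →ₗ[ℂ] ℂ) -
        ζ ^ k.val • LinearMap.proj 1 ∧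
      f (1, k) = (LinearMap.proj 0 : (Fin 3 → ℂ) →ₗ[ℂ] ℂ) -
        ζ ^ k.val • LinearMap.proj 2 ∧
      f (2, k) = (LinearMap.proj 1 : (Fin 3 → ℂ) →ₗ[ℂ] ℂ) -
        ζ ^ k.val • LinearMap.proj 2)
    (v₁ v₂ : Fin 3 × ZMod r → ℂ)
    (hv₁ : v₁ = ∑ k : ZMod r,
      ((Pi.single ((0 : Fin 3), k) 1 : Fin 3 × ZMod r → ℂ) -
        Pi.single ((2 : Fin 3), k) 1))
    (hv₂ : v₂ = ∑ k : ZMod r,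
      ((Pi.single ((1 : Fin 3), k) 1 : Fin 3 × ZMod r → ℂ) -
        Pi.single ((2 : Fin 3), k) 1)) :
    finrank ℂ (Submodule.span ℂ {v₁, v₂}) = 2 ∧
      (Submodule.span ℂ {v₁, v₂} : Set (Fin 3 × ZMod r → ℂ)) ⊆ osR1 f 1 :=
  essential_torus_monomial_rr3_general r ζ hζ f hf v₁ v₂ hv₁ hv₂
end
end

section
/- Let r ≥ 2 be an integer, ζ = exp(2πi/r), and let f be the full monomial arrangement 𝒜(r,1,3) on ℂ³: the 3 coordinate forms x₁, x₂, x₃ together with the 3r forms x_i − ζ^k x_j for (i,j) ∈ {(1,2),(1,3),(2,3)} and k ∈ ZMod r. Let u₁ = Σ_{k ∈ ZMod r} (e((1,2),k) − e((2,3),k)) + r·(e(x₃) − e(x₁)) and u₂ = Σ_{k ∈ ZMod r} (e((1,3),k) − e((2,3),k)) + r·(e(x₂) − e(x₁)), where e(u) denotes the standard basis vector at the index of the corresponding hyperplane. Then the span of {u₁, u₂} is 2-dimensional and is contained in R1_1(f). (This is the essential component of the first characteristic variety of the full monomial arrangement 𝒜(r,1,3).) -/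
/-!
The first cohomology support locus of the Orlik–Solomon algebra of the monomial
arrangement `𝒜(r,r,3)` (for `r ≥ 4`, `3 ∤ r`): it is the union of the three
"local" components `T_{ij}` coming from the points of multiplicity `r`, and of
the two-dimensional components `S(q,a,b)` indexed by positive divisors `q ∣ r`
and `a, b ∈ ZMod r`.

The index set of the arrangement is `Fin 3 × ZMod r`, where the first
coordinate `0, 1, 2` corresponds to the pair `(1,2), (1,3), (2,3)` respectively.
-/

noncomputable section

set_option maxHeartbeats 1600000

open Module

local notation "ιℂ" => ExteriorAlgebra.ι ℂ

private lemma ext_swap' {M : Type*} [AddCommGroup M] [Module ℂ M] (x y : M) :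
    ιℂ x * ιℂ y = -(ιℂ y * ιℂ x) :=
  eq_neg_of_add_eq_zero_left (ExteriorAlgebra.ι_add_mul_swap x y)

/-- The key exterior-algebra identity. -/
private lemma key_identity {M : Type*} [AddCommGroup M] [Module ℂ M] (r : ℕ) [NeZero r]
    (x y z : M) (v w t : ZMod r → M) :
    ιℂ ((∑ k : ZMod r, (v k - t k)) + (r : ℂ) • (z - x)) *
      ιℂ ((∑ k : ZMod r, (w k - t k)) + (r : ℂ) • (y - x)) =
    (∑ k : ZMod r, ∑ l : ZMod r, ιℂ (v k - t (l - k)) * ιℂ (w l - t (l - k)))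
      + (r : ℂ) • (∑ k : ZMod r, ιℂ (v k - x) * ιℂ (y - x))
      + (r : ℂ) • (∑ l : ZMod r, ιℂ (z - x) * ιℂ (w l - x))
      + (-(r : ℂ)) • (∑ m : ZMod r, ιℂ (z - y) * ιℂ (t m - y))
      + (∑ m : ZMod r, ∑ m' : ZMod r, ιℂ (t m - y) * ιℂ (t m' - y)) := by
  set A : ExteriorAlgebra ℂ M := ∑ k : ZMod r, ιℂ (v k) with hA
  set B : ExteriorAlgebra ℂ M := ∑ k : ZMod r, ιℂ (w k) with hB
  set C : ExteriorAlgebra ℂ M := ∑ k : ZMod r, ιℂ (t k) with hC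
  set P : ExteriorAlgebra ℂ M := (r : ℂ) • ιℂ x with hP
  set Q : ExteriorAlgebra ℂ M := (r : ℂ) • ιℂ y with hQ
  set S : ExteriorAlgebra ℂ M := (r : ℂ) • ιℂ z with hS
  have hsum_const : ∀ m : M, (∑ _k : ZMod r, ιℂ m) = (r : ℂ) • ιℂ m := by
    intro m
    rw [Finset.sum_const, Nat.cast_smul_eq_nsmul (R := ℂ)]
    simp [ZMod.card]
  have hL : ιℂ ((∑ k : ZMod r, (v k - t k)) + (r : ℂ) • (z - x)) *
      ιℂ ((∑ k : ZMod r, (w k - t k)) + (r : ℂ) • (y - x)) =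
      (A - C + (S - P)) * (B - C + (Q - P)) := by
    rw [map_add, map_add, map_smul, map_smul, map_sum, map_sum]
    simp only [map_sub, Finset.sum_sub_distrib, smul_sub]
    rfl
  rw [hL]
  have hT1 : (∑ k : ZMod r, ∑ l : ZMod r, ιℂ (v k - t (l - k)) * ιℂ (w l - t (l - k)))
      = A * B - A * C - C * B := by
    have step1 : ∀ k : ZMod r,
        (∑ l : ZMod r, ιℂ (v k - t (l - k)) * ιℂ (w l - t (l - k)))
        = ∑ m : ZMod r, ιℂ (v k - t m) * ιℂ (w (k + m) - t m) := by
      intro k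
      refine (Fintype.sum_equiv (Equiv.addLeft k) _ _ fun m => ?_).symm
      simp [add_sub_cancel_left]
    calc (∑ k : ZMod r, ∑ l : ZMod r, ιℂ (v k - t (l - k)) * ιℂ (w l - t (l - k)))
        = ∑ k : ZMod r, ∑ m : ZMod r, ιℂ (v k - t m) * ιℂ (w (k + m) - t m) := by
          exact Finset.sum_congr rfl fun k _ => step1 k
      _ = ∑ k : ZMod r, ∑ m : ZMod r,
            (ιℂ (v k) * ιℂ (w (k + m)) - ιℂ (v k) * ιℂ (t m) - ιℂ (t m) * ιℂ (w (k + m))) := by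
          refine Finset.sum_congr rfl fun k _ => Finset.sum_congr rfl fun m _ => ?_
          rw [map_sub, map_sub, sub_mul, mul_sub, mul_sub, ExteriorAlgebra.ι_sq_zero]
          abel
      _ = A * B - A * C - C * B := by
          simp only [Finset.sum_sub_distrib]
          congr 1
          · congr 1
            · rw [Finset.sum_mul]
              refine Finset.sum_congr rfl fun k _ => ?_
              rw [Finset.mul_sum]
              refine Fintype.sum_equiv (Equiv.addLeft k) _ _ fun m => ?_
              rfl
            · rw [Finset.sum_mul]
              refine Finset.sum_congr rfl fun k _ => ?_
              rw [Finset.mul_sum]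
          · rw [Finset.sum_comm, Finset.sum_mul]
            refine Finset.sum_congr rfl fun m _ => ?_
            rw [Finset.mul_sum]
            refine Fintype.sum_equiv (Equiv.addLeft m) _ _ fun k => ?_
            simp only [Equiv.coe_addLeft]
            rw [add_comm]
  have hT2 : (r : ℂ) • (∑ k : ZMod r, ιℂ (v k - x) * ιℂ (y - x)) = (A - P) * (Q - P) := by
    rw [← Finset.sum_mul]
    have : (∑ k : ZMod r, ιℂ (v k - x)) = A - P := by
      simp only [map_sub, Finset.sum_sub_distrib, hsum_const]
      rfl
    rw [this, ← mul_smul_comm, map_sub, smul_sub]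
  have hT3 : (r : ℂ) • (∑ l : ZMod r, ιℂ (z - x) * ιℂ (w l - x)) = (S - P) * (B - P) := by
    rw [← Finset.mul_sum]
    have : (∑ l : ZMod r, ιℂ (w l - x)) = B - P := by
      simp only [map_sub, Finset.sum_sub_distrib, hsum_const]
      rfl
    rw [this, ← smul_mul_assoc, map_sub, smul_sub]
  have hT4 : (-(r : ℂ)) • (∑ m : ZMod r, ιℂ (z - y) * ιℂ (t m - y)) = -((S - Q) * (C - Q)) := by
    rw [← Finset.mul_sum]
    have : (∑ m : ZMod r, ιℂ (t m - y)) = C - Q := by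
      simp only [map_sub, Finset.sum_sub_distrib, hsum_const]
      rfl
    rw [this, neg_smul, ← smul_mul_assoc, map_sub, smul_sub]
  have hT5 : (∑ m : ZMod r, ∑ m' : ZMod r, ιℂ (t m - y) * ιℂ (t m' - y))
      = (C - Q) * (C - Q) := by
    rw [← Fintype.sum_mul_sum]
    have : (∑ m : ZMod r, ιℂ (t m - y)) = C - Q := by
      simp only [map_sub, Finset.sum_sub_distrib, hsum_const]
      rfl
    rw [this]
  rw [hT1, hT2, hT3, hT4, hT5]
  have hPP : P * P = 0 := by
    rw [hP, smul_mul_assoc, mul_smul_comm, ExteriorAlgebra.ι_sq_zero, smul_zero, smul_zero]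
  have hQQ : Q * Q = 0 := by
    rw [hQ, smul_mul_assoc, mul_smul_comm, ExteriorAlgebra.ι_sq_zero, smul_zero, smul_zero]
  have hPC : P * C = -(C * P) := by
    rw [hP, hC, smul_mul_assoc, Finset.mul_sum, Finset.sum_mul]
    simp only [ext_swap' x]
    simp [Finset.smul_sum, mul_smul_comm, smul_neg]
  simp only [sub_mul, mul_sub, add_mul, mul_add, hPP, hQQ, hPC]
  abel

/-- Factored generators lie in `osI2`. -/
private lemma gen_mem_osI2 {I : Type*} [DecidableEq I] {ℓ : ℕ}
    (f : I → ((Fin ℓ → ℂ) →ₗ[ℂ] ℂ)) {i j k : I} (hij : i ≠ j) (hik : i ≠ k) (hjk : j ≠ k)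
    (hdep : ¬ LinearIndependent ℂ ![f i, f j, f k]) :
    ιℂ ((Pi.single j 1 : I → ℂ) - Pi.single i 1) *
      ιℂ ((Pi.single k 1 : I → ℂ) - Pi.single i 1) ∈ osI2 f := by
  have h : (ExteriorAlgebra.ι ℂ (Pi.single j 1 : I → ℂ) *
              ExteriorAlgebra.ι ℂ (Pi.single k 1 : I → ℂ)
          - ExteriorAlgebra.ι ℂ (Pi.single i 1 : I → ℂ) *
              ExteriorAlgebra.ι ℂ (Pi.single k 1 : I → ℂ)
          + ExteriorAlgebra.ι ℂ (Pi.single i 1 : I → ℂ) *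
              ExteriorAlgebra.ι ℂ (Pi.single j 1 : I → ℂ)) ∈ osI2 f :=
    Submodule.subset_span ⟨i, j, k, hij, hik, hjk, hdep, rfl⟩
  convert h using 1
  rw [map_sub, map_sub, sub_mul, mul_sub, mul_sub, ExteriorAlgebra.ι_sq_zero,
    ext_swap' (Pi.single j 1) (Pi.single i 1)]
  abel

private lemma not_li_of_combo {ℓ : ℕ} (v : Fin 3 → ((Fin ℓ → ℂ) →ₗ[ℂ] ℂ)) (c : Fin 3 → ℂ)
    (i : Fin 3) (hi : c i ≠ 0)
    (hc : c 0 • v 0 + c 1 • v 1 + c 2 • v 2 = 0) : ¬ LinearIndependent ℂ v := by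
  intro h
  exact hi (Fintype.linearIndependent_iff.mp h c (by rw [Fin.sum_univ_three]; exact hc) i)

/-- The essential component of the first characteristic variety of the full
monomial arrangement `𝒜(r,1,3)`.  The index set is `Fin 3 ⊕ (Fin 3 × ZMod r)`:
`Sum.inl i` corresponds to the coordinate hyperplane `ker xᵢ₊₁`, and
`Sum.inr ((i,j),k)` (with `0, 1, 2` corresponding to `(1,2), (1,3), (2,3)`) to
`ker (x_i − ζ^k x_j)`.  The span of
`u₁ = ∑ₖ (e((1,2),k) − e((2,3),k)) + r(e(x₃) − e(x₁))` and
`u₂ = ∑ₖ (e((1,3),k) − e((2,3),k)) + r(e(x₂) − e(x₁))`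
is a 2-dimensional subspace contained in `R¹₁(f)`. -/

theorem essential_torus_full_monomial_r13 (r : ℕ) [NeZero r] (hr : 2 ≤ r)
    (ζ : ℂ) (hζ : ζ = Complex.exp (2 * Real.pi * Complex.I / r))
    (f : (Fin 3 ⊕ Fin 3 × ZMod r) → ((Fin 3 → ℂ) →ₗ[ℂ] ℂ))
    (hfcoord : ∀ i : Fin 3,
      f (Sum.inl i) = (LinearMap.proj i : (Fin 3 → ℂ) →ₗ[ℂ] ℂ))
    (hf : ∀ k : ZMod r,
      f (Sum.inr (0, k)) = (LinearMap.proj 0 : (Fin 3 → ℂ) →ₗ[ℂ] ℂ) -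
        ζ ^ k.val • LinearMap.proj 1 ∧
      f (Sum.inr (1, k)) = (LinearMap.proj 0 : (Fin 3 → ℂ) →ₗ[ℂ] ℂ) -
        ζ ^ k.val • LinearMap.proj 2 ∧
      f (Sum.inr (2, k)) = (LinearMap.proj 1 : (Fin 3 → ℂ) →ₗ[ℂ] ℂ) -
        ζ ^ k.val • LinearMap.proj 2)
    (u₁ u₂ : Fin 3 ⊕ Fin 3 × ZMod r → ℂ)
    (hu₁ : u₁ = (∑ k : ZMod r,
        ((Pi.single (Sum.inr ((0 : Fin 3), k)) 1 : Fin 3 ⊕ Fin 3 × ZMod r → ℂ) -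
          Pi.single (Sum.inr ((2 : Fin 3), k)) 1)) +
      (r : ℂ) • ((Pi.single (Sum.inl (2 : Fin 3)) 1 : Fin 3 ⊕ Fin 3 × ZMod r → ℂ) -
        Pi.single (Sum.inl (0 : Fin 3)) 1))
    (hu₂ : u₂ = (∑ k : ZMod r,
        ((Pi.single (Sum.inr ((1 : Fin 3), k)) 1 : Fin 3 ⊕ Fin 3 × ZMod r → ℂ) -
          Pi.single (Sum.inr ((2 : Fin 3), k)) 1)) +
      (r : ℂ) • ((Pi.single (Sum.inl (1 : Fin 3)) 1 : Fin 3 ⊕ Fin 3 × ZMod r → ℂ) -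
        Pi.single (Sum.inl (0 : Fin 3)) 1)) :
    finrank ℂ (Submodule.span ℂ {u₁, u₂}) = 2 ∧
      (Submodule.span ℂ {u₁, u₂} : Set (Fin 3 ⊕ Fin 3 × ZMod r → ℂ)) ⊆ osR1 f 1 := by
  classical
  have hr0 : (r : ℂ) ≠ 0 := Nat.cast_ne_zero.mpr (NeZero.ne r)
  have hζ0 : ζ ≠ 0 := by rw [hζ]; exact Complex.exp_ne_zero _
  have hζr : ζ ^ r = 1 := by
    rw [hζ, ← Complex.exp_nat_mul]
    rw [show (r : ℂ) * (2 * Real.pi * Complex.I / r) = 2 * Real.pi * Complex.I by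
      field_simp]
    exact Complex.exp_two_pi_mul_I
  have hpow : ∀ k l : ZMod r, ζ ^ (k.val) * ζ ^ ((l - k).val) = ζ ^ (l.val) := by
    intro k l
    rw [← pow_add, pow_eq_pow_mod _ hζr, ← ZMod.val_add,
      show k + (l - k) = l by ring]
  -- dependence facts
  have dep1 : ∀ k l : ZMod r, ¬ LinearIndependent ℂ
      ![f (Sum.inr (2, l - k)), f (Sum.inr (0, k)), f (Sum.inr (1, l))] := by
    intro k l
    refine not_li_of_combo _ ![ζ ^ k.val, 1, -1] 1 (by norm_num) ?_
    simp only [Matrix.cons_val_zero, Matrix.cons_val_one, Matrix.head_cons,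
      Matrix.cons_val_two, Matrix.tail_cons]
    rw [(hf (l - k)).2.2, (hf k).1, (hf l).2.1]
    refine LinearMap.ext fun x => ?_
    simp only [LinearMap.add_apply, LinearMap.smul_apply, LinearMap.sub_apply,
      LinearMap.proj_apply, LinearMap.zero_apply, LinearMap.neg_apply, smul_eq_mul, one_smul, neg_smul]
    linear_combination (-(x 2)) * hpow k l
  have dep2 : ∀ k : ZMod r, ¬ LinearIndependent ℂ
      ![f (Sum.inl 0), f (Sum.inr (0, k)), f (Sum.inl 1)] := by
    intro k
    refine not_li_of_combo _ ![1, -1, -ζ ^ k.val] 0 (by norm_num) ?_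
    simp only [Matrix.cons_val_zero, Matrix.cons_val_one, Matrix.head_cons,
      Matrix.cons_val_two, Matrix.tail_cons]
    rw [hfcoord 0, (hf k).1, hfcoord 1]
    refine LinearMap.ext fun x => ?_
    simp only [LinearMap.add_apply, LinearMap.smul_apply, LinearMap.sub_apply,
      LinearMap.proj_apply, LinearMap.zero_apply, LinearMap.neg_apply, smul_eq_mul, one_smul, neg_smul]
    ring
  have dep3 : ∀ l : ZMod r, ¬ LinearIndependent ℂ
      ![f (Sum.inl 0), f (Sum.inl 2), f (Sum.inr (1, l))] := by
    intro l
    refine not_li_of_combo _ ![1, -ζ ^ l.val, -1] 0 (by norm_num) ?_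
    simp only [Matrix.cons_val_zero, Matrix.cons_val_one, Matrix.head_cons,
      Matrix.cons_val_two, Matrix.tail_cons]
    rw [hfcoord 0, hfcoord 2, (hf l).2.1]
    refine LinearMap.ext fun x => ?_
    simp only [LinearMap.add_apply, LinearMap.smul_apply, LinearMap.sub_apply,
      LinearMap.proj_apply, LinearMap.zero_apply, LinearMap.neg_apply, smul_eq_mul, one_smul, neg_smul]
    ring
  have dep4 : ∀ m : ZMod r, ¬ LinearIndependent ℂ
      ![f (Sum.inl 1), f (Sum.inl 2), f (Sum.inr (2, m))] := by
    intro m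
    refine not_li_of_combo _ ![1, -ζ ^ m.val, -1] 0 (by norm_num) ?_
    simp only [Matrix.cons_val_zero, Matrix.cons_val_one, Matrix.head_cons,
      Matrix.cons_val_two, Matrix.tail_cons]
    rw [hfcoord 1, hfcoord 2, (hf m).2.2]
    refine LinearMap.ext fun x => ?_
    simp only [LinearMap.add_apply, LinearMap.smul_apply, LinearMap.sub_apply,
      LinearMap.proj_apply, LinearMap.zero_apply, LinearMap.neg_apply, smul_eq_mul, one_smul, neg_smul]
    ring
  have dep5 : ∀ m m' : ZMod r, ¬ LinearIndependent ℂ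
      ![f (Sum.inl 1), f (Sum.inr (2, m)), f (Sum.inr (2, m'))] := by
    intro m m'
    refine not_li_of_combo _ ![ζ ^ m'.val - ζ ^ m.val, -ζ ^ m'.val, ζ ^ m.val] 1
      (by simpa using pow_ne_zero m'.val hζ0) ?_
    simp only [Matrix.cons_val_zero, Matrix.cons_val_one, Matrix.head_cons,
      Matrix.cons_val_two, Matrix.tail_cons]
    rw [hfcoord 1, (hf m).2.2, (hf m').2.2]
    refine LinearMap.ext fun x => ?_
    simp only [LinearMap.add_apply, LinearMap.smul_apply, LinearMap.sub_apply,
      LinearMap.proj_apply, LinearMap.zero_apply, LinearMap.neg_apply, smul_eq_mul, one_smul, neg_smul]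
    ring
  -- the key membership
  have hkey : ιℂ u₁ * ιℂ u₂ ∈ osI2 f := by
    rw [hu₁, hu₂, key_identity r (Pi.single (Sum.inl 0) 1) (Pi.single (Sum.inl 1) 1)
      (Pi.single (Sum.inl 2) 1) (fun k => Pi.single (Sum.inr (0, k)) 1)
      (fun l => Pi.single (Sum.inr (1, l)) 1) (fun m => Pi.single (Sum.inr (2, m)) 1)]
    refine Submodule.add_mem _ (Submodule.add_mem _ (Submodule.add_mem _
      (Submodule.add_mem _ ?_ ?_) ?_) ?_) ?_
    · refine Submodule.sum_mem _ fun k _ => Submodule.sum_mem _ fun l _ => ?_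
      exact gen_mem_osI2 f (by simp) (by simp) (by simp) (dep1 k l)
    · refine Submodule.smul_mem _ _ (Submodule.sum_mem _ fun k _ => ?_)
      exact gen_mem_osI2 f (by simp) (by simp) (by simp) (dep2 k)
    · refine Submodule.smul_mem _ _ (Submodule.sum_mem _ fun l _ => ?_)
      exact gen_mem_osI2 f (by simp) (by simp) (by simp) (dep3 l)
    · refine Submodule.smul_mem _ _ (Submodule.sum_mem _ fun m _ => ?_)
      exact gen_mem_osI2 f (by simp) (by simp) (by simp) (dep4 m)
    · refine Submodule.sum_mem _ fun m _ => Submodule.sum_mem _ fun m' _ => ?_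
      by_cases hmm : m = m'
      · subst hmm
        rw [ExteriorAlgebra.ι_sq_zero]
        exact Submodule.zero_mem _
      · exact gen_mem_osI2 f (by simp) (by simp) (by simp [hmm]) (dep5 m m')
  -- coordinates of u₁, u₂
  have h11 : u₁ (Sum.inl 1) = 0 := by
    rw [hu₁]; simp [Finset.sum_apply, Pi.single_apply]
  have h12 : u₁ (Sum.inl 2) = r := by
    rw [hu₁]; simp [Finset.sum_apply, Pi.single_apply]
  have h21 : u₂ (Sum.inl 1) = r := by
    rw [hu₂]; simp [Finset.sum_apply, Pi.single_apply]
  have h22 : u₂ (Sum.inl 2) = 0 := by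
    rw [hu₂]; simp [Finset.sum_apply, Pi.single_apply]
  have hli : LinearIndependent ℂ ![u₁, u₂] := by
    rw [LinearIndependent.pair_iff]
    intro s t hst
    have e1 := congrFun hst (Sum.inl 1)
    have e2 := congrFun hst (Sum.inl 2)
    simp only [Pi.add_apply, Pi.smul_apply, smul_eq_mul, h11, h12, h21, h22,
      Pi.zero_apply, mul_zero, zero_add, add_zero] at e1 e2
    constructor
    · rcases mul_eq_zero.mp e2 with h | h
      · exact h
      · exact absurd h hr0
    · rcases mul_eq_zero.mp e1 with h | h
      · exact h
      · exact absurd h hr0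
  have hrank : finrank ℂ (Submodule.span ℂ {u₁, u₂} :
      Submodule ℂ (Fin 3 ⊕ Fin 3 × ZMod r → ℂ)) = 2 := by
    rw [show ({u₁, u₂} : Set (Fin 3 ⊕ Fin 3 × ZMod r → ℂ)) = Set.range ![u₁, u₂] from
      (Matrix.range_cons_cons_empty u₁ u₂ ![]).symm, finrank_span_eq_card hli]
    simp
  refine ⟨hrank, ?_⟩
  intro lam hlam
  rw [SetLike.mem_coe, Submodule.mem_span_pair] at hlam
  obtain ⟨a, b, rfl⟩ := hlam
  set lam := a • u₁ + b • u₂ with hlamdef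
  have hKle : Submodule.span ℂ {u₁, u₂} ≤ osK f lam := by
    rw [Submodule.span_le]
    intro w hw
    simp only [Set.mem_insert_iff, Set.mem_singleton_iff] at hw
    have hιlam : ιℂ lam = a • ιℂ u₁ + b • ιℂ u₂ := by
      rw [hlamdef, map_add, map_smul, map_smul]
    rcases hw with rfl | rfl
    · show w ∈ osK f lam
      simp only [osK, Submodule.mem_comap, LinearMap.coe_comp, Function.comp_apply,
        LinearMap.mulLeft_apply]
      have : ιℂ lam * ιℂ w = (-b) • (ιℂ w * ιℂ u₂) := by
        rw [hιlam, add_mul, smul_mul_assoc, smul_mul_assoc, ExteriorAlgebra.ι_sq_zero,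
          ext_swap' u₂ w]
        simp [smul_neg]
      rw [this]
      exact Submodule.smul_mem _ _ hkey
    · show w ∈ osK f lam
      simp only [osK, Submodule.mem_comap, LinearMap.coe_comp, Function.comp_apply,
        LinearMap.mulLeft_apply]
      have : ιℂ lam * ιℂ w = a • (ιℂ u₁ * ιℂ w) := by
        rw [hιlam, add_mul, smul_mul_assoc, smul_mul_assoc, ExteriorAlgebra.ι_sq_zero]
        simp
      rw [this]
      exact Submodule.smul_mem _ _ hkey
  show lam ∈ osR1 f 1
  simp only [osR1, Set.mem_setOf_eq]
  rcases eq_or_ne lam 0 with h0 | h0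
  · rw [if_pos h0]
    have hKtop : osK f lam = ⊤ := by
      rw [eq_top_iff]
      intro η _
      simp only [osK, Submodule.mem_comap, LinearMap.coe_comp, Function.comp_apply,
        LinearMap.mulLeft_apply, h0, map_zero, zero_mul]
      exact Submodule.zero_mem _
    rw [hKtop, finrank_top, Module.finrank_pi]
    have : 0 < Fintype.card (Fin 3 ⊕ Fin 3 × ZMod r) := Fintype.card_pos
    omega
  · rw [if_neg h0]
    have h2 : 2 ≤ finrank ℂ (osK f lam) := by
      calc 2 = finrank ℂ (Submodule.span ℂ {u₁, u₂} :
            Submodule ℂ (Fin 3 ⊕ Fin 3 × ZMod r → ℂ)) := hrank.symm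
        _ ≤ finrank ℂ (osK f lam) := Submodule.finrank_mono hKle
    omega
end
end

section
/- Let r = p·q with integers p, q ≥ 1, let ζ = exp(2πi/r), so ω = ζ^p = exp(2πi/q). For integers a, b, let T_{a,b} : ℂ³ ≃ₗ ℂ³ be the diagonal linear automorphism T_{a,b}(x₁,x₂,x₃) = (x₁, ζ^a·x₂, ζ^{a+b}·x₃). Then for every a, b the set of hyperplanes {ker(g ∘ T_{a,b}) | g a defining form of 𝒜(q,q,3) for the root ω} equals the set of 3q hyperplanes {ker(x₁ − ζ^{a+kp} x₂), ker(x₂ − ζ^{b+kp} x₃), ker(x₁ − ζ^{a+b+kp} x₃) | 0 ≤ k ≤ q−1}, and every hyperplane in this set is a hyperplane of 𝒜(r,r,3); moreover the map {0,…,p−1}² → sets of hyperplanes sending (a,b) to this subarrangement is injective. Hence 𝒜(r,r,3) contains p² subarrangements, each linearly isomorphic to 𝒜(q,q,3). -/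
/-!
Pulling `x_i - ω^k x_j` back along the diagonal map `T_{a,b}` gives a nonzero multiple of
`x_i - ζ^e x_j`, where `e` is `kp` shifted by the exponents of the diagonal entries; reducing `e`
modulo `r` puts the hyperplane into `𝒜(r,r,3)`. The hyperplanes `ker (x₁ - c x₂)` of the
subarrangement for `(a, b)` are those with `c = ζ^{a+kp}`, `k < q`; all these exponents are below
`r` and `ζ` is a primitive `r`-th root, so `a < p` is recovered as the exponent with `k = 0`, and
`b` likewise from the hyperplanes `ker (x₂ - c x₃)`.
-/

open LinearMap

variable {K : Type*} [Field K] {n : ℕ}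

def diffForm (i j : Fin n) (c : K) : (Fin n → K) →ₗ[K] K := proj i - c • proj j

@[simp]
lemma diffForm_apply (i j : Fin n) (c : K) (v : Fin n → K) : diffForm i j c v = v i - c * v j :=
  rfl

lemma ker_diffForm_injective {i j : Fin n} (hij : i ≠ j) :
    Function.Injective fun c : K => ker (diffForm i j c) := by
  intro c c' h
  have hv : Pi.single i c + Pi.single j 1 ∈ ker (diffForm i j c) := by
    simp [hij, hij.symm]
  rw [show ker (diffForm i j c) = ker (diffForm i j c') from h] at hv
  simpa [hij, hij.symm, sub_eq_zero] using hv

lemma ker_diffForm_ne_of_fst_notMem {i j k l : Fin n} (hij : i ≠ j) (hik : i ≠ k) (hil : i ≠ l)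
    (c c' : K) : ker (diffForm i j c) ≠ ker (diffForm k l c') := by
  intro h
  have hv : Pi.single i 1 ∈ ker (diffForm k l c') := by
    simp [hik.symm, hil.symm]
  rw [← h] at hv
  simp [hij.symm] at hv

lemma ker_diffForm_ne_of_snd_notMem {i j k l : Fin n} (hkl : k ≠ l) (hli : l ≠ i) (hlj : l ≠ j)
    (c : K) {c' : K} (hc' : c' ≠ 0) : ker (diffForm i j c) ≠ ker (diffForm k l c') := by
  intro h
  have hv : Pi.single l 1 ∈ ker (diffForm i j c) := by
    simp [hli.symm, hlj.symm]
  rw [h] at hv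
  simp [hkl] at hv
  exact hc' hv

lemma ker_diffForm_comp_diagonal {i j : Fin n} {c c' : K} {D : (Fin n → K) →ₗ[K] (Fin n → K)}
    {d : Fin n → K} (hD : ∀ v, D v = d * v) (hdi : d i ≠ 0) (hc : d i * c' = c * d j) :
    ker (diffForm i j c ∘ₗ D) = ker (diffForm i j c') := by
  have : diffForm i j c ∘ₗ D = d i • diffForm i j c' := by
    refine LinearMap.ext fun v => ?_
    simp only [comp_apply, hD, diffForm_apply, Pi.mul_apply, LinearMap.smul_apply, smul_eq_mul]
    linear_combination (v j) * hc
  rw [this, ker_smul _ _ hdi]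

section Monomial

variable (ζ : K) (p q : ℕ)

/-- For a primitive `q`-th root of unity `ζ`, the defining forms of `𝒜(q,q,3)`. -/
def monomialForms : Set ((Fin 3 → K) →ₗ[K] K) :=
  {g | ∃ k < q, g = diffForm 0 1 (ζ ^ k) ∨ g = diffForm 0 2 (ζ ^ k) ∨ g = diffForm 1 2 (ζ ^ k)}

def monomialArrangement : Set (Submodule K (Fin 3 → K)) :=
  {H | ∃ k < q, H = ker (diffForm 0 1 (ζ ^ k)) ∨ H = ker (diffForm 0 2 (ζ ^ k)) ∨
    H = ker (diffForm 1 2 (ζ ^ k))}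

def monomialSubarrangement (a b : ℕ) : Set (Submodule K (Fin 3 → K)) :=
  {H | ∃ k < q, H = ker (diffForm 0 1 (ζ ^ (a + k * p))) ∨
    H = ker (diffForm 1 2 (ζ ^ (b + k * p))) ∨ H = ker (diffForm 0 2 (ζ ^ (a + b + k * p)))}

variable {ζ p q}

lemma ker_comp_monomialForms {a b : ℕ} (hζ : ζ ≠ 0) {D : (Fin 3 → K) →ₗ[K] (Fin 3 → K)}
    (hD : ∀ v, D v = ![v 0, ζ ^ a * v 1, ζ ^ (a + b) * v 2]) :
    {H | ∃ g ∈ monomialForms (ζ ^ p) q, H = ker (g ∘ₗ D)} = monomialSubarrangement ζ p q a b := by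
  have hD' : ∀ v, D v = ![1, ζ ^ a, ζ ^ (a + b)] * v := fun v => by
    rw [hD]; ext i; fin_cases i <;> simp
  have h01 (k : ℕ) : ker (diffForm 0 1 ((ζ ^ p) ^ k) ∘ₗ D) = ker (diffForm 0 1 (ζ ^ (a + k * p))) :=
    ker_diffForm_comp_diagonal hD' one_ne_zero (show 1 * _ = _ * ζ ^ a by ring)
  have h02 (k : ℕ) :
      ker (diffForm 0 2 ((ζ ^ p) ^ k) ∘ₗ D) = ker (diffForm 0 2 (ζ ^ (a + b + k * p))) :=
    ker_diffForm_comp_diagonal hD' one_ne_zero (show 1 * _ = _ * ζ ^ (a + b) by ring)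
  have h12 (k : ℕ) : ker (diffForm 1 2 ((ζ ^ p) ^ k) ∘ₗ D) = ker (diffForm 1 2 (ζ ^ (b + k * p))) :=
    ker_diffForm_comp_diagonal hD' (pow_ne_zero a hζ) (show ζ ^ a * _ = _ * ζ ^ (a + b) by ring)
  ext H
  constructor
  · rintro ⟨g, ⟨k, hk, rfl | rfl | rfl⟩, rfl⟩
    exacts [⟨k, hk, .inl (h01 k)⟩, ⟨k, hk, .inr (.inr (h02 k))⟩, ⟨k, hk, .inr (.inl (h12 k))⟩]
  · rintro ⟨k, hk, rfl | rfl | rfl⟩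
    exacts [⟨_, ⟨k, hk, .inl rfl⟩, (h01 k).symm⟩, ⟨_, ⟨k, hk, .inr (.inr rfl)⟩, (h12 k).symm⟩,
      ⟨_, ⟨k, hk, .inr (.inl rfl)⟩, (h02 k).symm⟩]

lemma monomialSubarrangement_subset {r : ℕ} (hr : 0 < r) (hζr : ζ ^ r = 1) (a b : ℕ) :
    monomialSubarrangement ζ p q a b ⊆ monomialArrangement ζ r := by
  rintro H ⟨k, -, rfl | rfl | rfl⟩
  · exact ⟨_, Nat.mod_lt _ hr, .inl (by rw [← pow_eq_pow_mod _ hζr])⟩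
  · exact ⟨_, Nat.mod_lt _ hr, .inr (.inr (by rw [← pow_eq_pow_mod _ hζr]))⟩
  · exact ⟨_, Nat.mod_lt _ hr, .inr (.inl (by rw [← pow_eq_pow_mod _ hζr]))⟩

lemma exists_of_ker_diffForm01_mem {a b : ℕ} {c : K} (hζ : ζ ≠ 0)
    (h : ker (diffForm 0 1 c) ∈ monomialSubarrangement ζ p q a b) :
    ∃ k < q, c = ζ ^ (a + k * p) := by
  obtain ⟨k, hk, h | h | h⟩ := h
  · exact ⟨k, hk, ker_diffForm_injective (by decide) h⟩
  · exact absurd h (ker_diffForm_ne_of_fst_notMem (by decide) (by decide) (by decide) _ _)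
  · exact absurd h (ker_diffForm_ne_of_snd_notMem (by decide) (by decide) (by decide) _
      (pow_ne_zero _ hζ))

lemma exists_of_ker_diffForm12_mem {a b : ℕ} {c : K}
    (h : ker (diffForm 1 2 c) ∈ monomialSubarrangement ζ p q a b) :
    ∃ k < q, c = ζ ^ (b + k * p) := by
  obtain ⟨k, hk, h | h | h⟩ := h
  · exact absurd h.symm (ker_diffForm_ne_of_fst_notMem (by decide) (by decide) (by decide) _ _)
  · exact ⟨k, hk, ker_diffForm_injective (by decide) h⟩
  · exact absurd h (ker_diffForm_ne_of_fst_notMem (by decide) (by decide) (by decide) _ _)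

lemma IsPrimitiveRoot.eq_of_pow_eq_pow_add_mul (hζ : IsPrimitiveRoot ζ (p * q)) {m m' k : ℕ}
    (hm : m < p) (hm' : m' < p) (hk : k < q) (h : ζ ^ m = ζ ^ (m' + k * p)) : m = m' := by
  have hmr : m < p * q := hm.trans_le (Nat.le_mul_of_pos_right p (by omega))
  have hm'r : m' + k * p < p * q := by nlinarith
  have := hζ.pow_inj hmr hm'r h
  rcases Nat.eq_zero_or_pos k with rfl | hk0
  · simpa using this
  · nlinarith

lemma monomialSubarrangement_injective (hζ : IsPrimitiveRoot ζ (p * q)) (hq : 0 < q) :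
    Function.Injective fun ab : Fin p × Fin p => monomialSubarrangement ζ p q ab.1 ab.2 := by
  rintro ⟨a, b⟩ ⟨a', b'⟩ h
  replace h : monomialSubarrangement ζ p q a b = monomialSubarrangement ζ p q a' b' := h
  have hζ0 : ζ ≠ 0 := hζ.ne_zero (Nat.mul_ne_zero a.pos.ne' hq.ne')
  have hmem01 : ker (diffForm 0 1 (ζ ^ (a + 0 * p))) ∈ monomialSubarrangement ζ p q a' b' :=
    h ▸ ⟨0, hq, .inl rfl⟩
  have hmem12 : ker (diffForm 1 2 (ζ ^ (b + 0 * p))) ∈ monomialSubarrangement ζ p q a' b' :=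
    h ▸ ⟨0, hq, .inr (.inl rfl)⟩
  obtain ⟨k, hk, hka⟩ := exists_of_ker_diffForm01_mem hζ0 hmem01
  obtain ⟨l, hl, hlb⟩ := exists_of_ker_diffForm12_mem hmem12
  simp only [zero_mul, add_zero] at hka hlb
  simp only [Prod.mk.injEq, Fin.ext_iff]
  exact ⟨hζ.eq_of_pow_eq_pow_add_mul a.2 a'.2 hk hka, hζ.eq_of_pow_eq_pow_add_mul b.2 b'.2 hl hlb⟩

end Monomial
theorem monomial_subarrangements (p q : ℕ) (hp : 1 ≤ p) (hq : 1 ≤ q)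
    (r : ℕ) (hr : r = p * q)
    (ζ ω : ℂ) (hζ : ζ = Complex.exp (2 * Real.pi * Complex.I / r))
    (hω : ω = ζ ^ p)
    -- the diagonal linear automorphisms `T_{a,b}(x₁,x₂,x₃) = (x₁, ζ^a x₂, ζ^{a+b} x₃)`
    (T : ℕ → ℕ → ((Fin 3 → ℂ) ≃ₗ[ℂ] (Fin 3 → ℂ)))
    (hT : ∀ a b : ℕ, ∀ v : Fin 3 → ℂ,
      T a b v = ![v 0, ζ ^ a * v 1, ζ ^ (a + b) * v 2])
    -- the defining forms of `𝒜(q,q,3)` for the root of unity `ω`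
    (formsQ : Set ((Fin 3 → ℂ) →ₗ[ℂ] ℂ))
    (hformsQ : formsQ = { g | ∃ k : ℕ, k < q ∧
      (g = (LinearMap.proj 0 : (Fin 3 → ℂ) →ₗ[ℂ] ℂ) - ω ^ k • LinearMap.proj 1 ∨
       g = (LinearMap.proj 0 : (Fin 3 → ℂ) →ₗ[ℂ] ℂ) - ω ^ k • LinearMap.proj 2 ∨
       g = (LinearMap.proj 1 : (Fin 3 → ℂ) →ₗ[ℂ] ℂ) - ω ^ k • LinearMap.proj 2) })
    -- the subarrangement associated to `(a, b)`: the hyperplanes `ker (g ∘ T_{a,b})`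
    (sub : ℕ → ℕ → Set (Submodule ℂ (Fin 3 → ℂ)))
    (hsub : ∀ a b : ℕ, sub a b =
      { H | ∃ g ∈ formsQ, H = LinearMap.ker (g ∘ₗ (T a b).toLinearMap) })
    -- the hyperplanes of `𝒜(r,r,3)`
    (hypR : Set (Submodule ℂ (Fin 3 → ℂ)))
    (hhypR : hypR = { H | ∃ k : ℕ, k < r ∧
      (H = LinearMap.ker
            ((LinearMap.proj 0 : (Fin 3 → ℂ) →ₗ[ℂ] ℂ) - ζ ^ k • LinearMap.proj 1) ∨
       H = LinearMap.ker
            ((LinearMap.proj 0 : (Fin 3 → ℂ) →ₗ[ℂ] ℂ) - ζ ^ k • LinearMap.proj 2) ∨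
       H = LinearMap.ker
            ((LinearMap.proj 1 : (Fin 3 → ℂ) →ₗ[ℂ] ℂ) - ζ ^ k • LinearMap.proj 2)) }) :
    (∀ a b : ℕ,
      sub a b = { H | ∃ k : ℕ, k < q ∧
        (H = LinearMap.ker
              ((LinearMap.proj 0 : (Fin 3 → ℂ) →ₗ[ℂ] ℂ) -
                ζ ^ (a + k * p) • LinearMap.proj 1) ∨
         H = LinearMap.ker
              ((LinearMap.proj 1 : (Fin 3 → ℂ) →ₗ[ℂ] ℂ) -
                ζ ^ (b + k * p) • LinearMap.proj 2) ∨
         H = LinearMap.ker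
              ((LinearMap.proj 0 : (Fin 3 → ℂ) →ₗ[ℂ] ℂ) -
                ζ ^ (a + b + k * p) • LinearMap.proj 2)) } ∧
      sub a b ⊆ hypR) ∧
    Function.Injective (fun ab : Fin p × Fin p => sub (ab.1 : ℕ) (ab.2 : ℕ)) := by
  subst hr hω hformsQ hhypR
  have hprim : IsPrimitiveRoot ζ (p * q) := hζ ▸ Complex.isPrimitiveRoot_exp _ (by positivity)
  have hdesc (a b : ℕ) : sub a b = monomialSubarrangement ζ p q a b :=
    (hsub a b).trans (ker_comp_monomialForms (hprim.ne_zero (by positivity)) (hT a b))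
  refine ⟨fun a b => ⟨hdesc a b, ?_⟩, ?_⟩
  · rw [hdesc]
    exact monomialSubarrangement_subset (by positivity) hprim.pow_eq_one a b
  · simpa only [hdesc] using monomialSubarrangement_injective hprim hq
end

section
/- Let n₁, n₂ ≥ 1 and n = n₁ + n₂. Let p₁ : Λ_n → Λ_{n₁} and p₂ : Λ_n → Λ_{n₂} be the ring homomorphisms induced by the coordinate projections (Fin n → ℤ) → (Fin n₁ → ℤ) and (Fin n → ℤ) → (Fin n₂ → ℤ) (identifying Fin n with Fin n₁ ⊕ Fin n₂). Let B₁ be any Λ_{n₁}-module and B₂ any Λ_{n₂}-module, and regard B = B₁ × B₂ as a Λ_n-module, with Λ_n acting on B₁ through p₁ and on B₂ through p₂. Then for every k ≥ 1 and every t = (t₁, t₂) ∈ (Fin n₁ → ℂˣ) × (Fin n₂ → ℂˣ) with t ≠ (1,1): Module.rank ℂ (ℂ_t ⊗[Λ_n] B) ≥ k if and only if (t₂ = 1 and Module.rank ℂ (ℂ_{t₁} ⊗[Λ_{n₁}] B₁) ≥ k) or (t₁ = 1 and Module.rank ℂ (ℂ_{t₂} ⊗[Λ_{n₂}] B₂)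 ≥ k). (This is the characteristic-variety product formula V_k(M₁ × M₂) = (V_k(M₁) × 1) ∪ (1 × V_k(M₂)), stated away from the identity character.) -/
noncomputable section

/-- The ring `Λ_n = ℂ[ℤⁿ]` of complex Laurent polynomials in `n` variables. -/
abbrev Lau (n : ℕ) : Type := AddMonoidAlgebra ℂ (Fin n → ℤ)

/-- The character of the lattice `ℤⁿ` determined by a point `t ∈ (ℂˣ)ⁿ`:
it sends `m : Fin n → ℤ` to `∏ i, (t i)^(m i)`. -/
def charUnits {n : ℕ} (t : Fin n → ℂˣ) : Multiplicative (Fin n → ℤ) →* ℂˣ :=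
  ∏ i : Fin n, (zpowersHom ℂˣ (t i)).comp
    (AddMonoidHom.toMultiplicative (Pi.evalAddMonoidHom (fun _ : Fin n => ℤ) i))

/-- The evaluation ring homomorphism `ε_t : Λ_n → ℂ`, sending the basis element
indexed by `m : Fin n → ℤ` to `∏ i, (t i)^(m i)`. -/
def epsHom {n : ℕ} (t : Fin n → ℂˣ) : Lau n →+* ℂ :=
  ((AddMonoidAlgebra.lift ℂ ℂ (Fin n → ℤ))
    ((Units.coeHom ℂ).comp (charUnits t))).toRingHom

/-- `ℂ_t`: the field `ℂ`, regarded as a `Λ_n`-module through `ε_t`. -/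
def CV (n : ℕ) (t : Fin n → ℂˣ) : Type := ℂ

instance (n : ℕ) (t : Fin n → ℂˣ) : AddCommGroup (CV n t) :=
  inferInstanceAs (AddCommGroup ℂ)

instance (n : ℕ) (t : Fin n → ℂˣ) : Module ℂ (CV n t) :=
  inferInstanceAs (Module ℂ ℂ)

instance (n : ℕ) (t : Fin n → ℂˣ) : Module (Lau n) (CV n t) :=
  Module.compHom ℂ (epsHom t)

instance (n : ℕ) (t : Fin n → ℂˣ) : SMulCommClass (Lau n) ℂ (CV n t) := by
  haveI h : SMulCommClass ℂ ℂ (CV n t) := inferInstanceAs (SMulCommClass ℂ ℂ ℂ)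
  exact ⟨fun a c x => smul_comm (epsHom t a) c x⟩

/-- The coordinate projection `(Fin (n₁+n₂) → ℤ) →+ (Fin n₁ → ℤ)` onto the
first block of coordinates. -/
def projAdd₁ (n₁ n₂ : ℕ) : (Fin (n₁ + n₂) → ℤ) →+ (Fin n₁ → ℤ) :=
  AddMonoidHom.mk' (fun m i => m (Fin.castAdd n₂ i)) (fun _ _ => rfl)

/-- The coordinate projection `(Fin (n₁+n₂) → ℤ) →+ (Fin n₂ → ℤ)` onto the
second block of coordinates. -/
def projAdd₂ (n₁ n₂ : ℕ) : (Fin (n₁ + n₂) → ℤ) →+ (Fin n₂ → ℤ) :=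
  AddMonoidHom.mk' (fun m i => m (Fin.natAdd n₁ i)) (fun _ _ => rfl)

/-- The induced ring homomorphism `p₁ : Λ_{n₁+n₂} → Λ_{n₁}`. -/
def projRing₁ (n₁ n₂ : ℕ) : Lau (n₁ + n₂) →+* Lau n₁ :=
  AddMonoidAlgebra.mapDomainRingHom ℂ (projAdd₁ n₁ n₂)

/-- The induced ring homomorphism `p₂ : Λ_{n₁+n₂} → Λ_{n₂}`. -/
def projRing₂ (n₁ n₂ : ℕ) : Lau (n₁ + n₂) →+* Lau n₂ :=
  AddMonoidAlgebra.mapDomainRingHom ℂ (projAdd₂ n₁ n₂)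

/-!
Since `ℂ_t ⊗ (B₁ × B₂) ≅ (ℂ_t ⊗ B₁) × (ℂ_t ⊗ B₂)`, the ranks add. A variable `x_j` of the second
block acts on `B₁` as `1` but on `ℂ_t` as `t₂ j`, so `ℂ_t ⊗ B₁ = 0` unless `t₂ = 1`; and when
`t₂ = 1` the character `ε_t` factors as `ε_{t₁} ∘ p₁` through the surjection `p₁`, so
`ℂ_t ⊗_{Λ_n} B₁ ≅ ℂ_{t₁} ⊗_{Λ_{n₁}} B₁`. Symmetrically for `B₂`, and for `t ≠ 1` at most one of the
two summands survives.
-/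

universe u

namespace TensorProduct

variable {K R : Type*} [CommRing R]
  {M N P : Type u} [AddCommGroup M] [Module R M] [AddCommGroup N] [Module R N] [AddCommGroup P]

section
variable [CommRing K] [Module K M] [SMulCommClass R K M] [Module K P]

def linearEquivOfSMulTmul (f : M ⊗[R] N ≃+ P)
    (hf : ∀ (c : K) (m : M) (n : N), f ((c • m) ⊗ₜ n) = c • f (m ⊗ₜ n)) :
    M ⊗[R] N ≃ₗ[K] P :=
  f.toLinearEquiv fun c x => by
    induction x using TensorProduct.induction_on with
    | zero => simp
    | tmul m n => rw [smul_tmul', hf]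
    | add x y hx hy => rw [smul_add, map_add, map_add, hx, hy, smul_add]

variable {S : Type*} {M' : Type u} [CommRing S] [AddCommGroup M'] [Module S M'] [Module K M']
  [SMulCommClass S K M'] [Module S N]

theorem rank_eq_of_surjective (p : R →+* S) (hp : Function.Surjective p) (e : M ≃ₗ[K] M')
    (he : ∀ (r : R) (m : M), e (r • m) = p r • e m) (hN : ∀ (r : R) (n : N), r • n = p r • n) :
    Module.rank K (M ⊗[R] N) = Module.rank K (M' ⊗[S] N) := by
  let : Module R M' := Module.compHom M' p
  have : SMulCommClass R K M' := ⟨fun r c m => smul_comm (p r) c m⟩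
  have : SMulCommClass R S M' := ⟨fun r s m => smul_comm (p r) s m⟩
  have : CompatibleSMul R S M' N := ⟨fun s m n => by
    obtain ⟨r, rfl⟩ := hp s
    rw [← hN]; exact smul_tmul r m n⟩
  have : CompatibleSMul S R M' N := ⟨fun r m n => by rw [hN]; exact smul_tmul (p r) m n⟩
  let eR : M ≃ₗ[R] M' := { e with map_smul' := he }
  have hcongr := (linearEquivOfSMulTmul (K := K) (congr eR (.refl R N)).toAddEquiv
    fun c m n => by
      simp only [LinearEquiv.coe_toAddEquiv]
      exact congrArg (· ⊗ₜ[R] n) (e.map_smul c m)).rank_eq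
  rw [hcongr, (equivOfCompatibleSMul R S K M' N).rank_eq]

end

section
variable [Field K] [Module K M] [SMulCommClass R K M]

theorem rank_prodRight [Module R P] :
    Module.rank K (M ⊗[R] (N × P)) = Module.rank K (M ⊗[R] N) + Module.rank K (M ⊗[R] P) := by
  rw [← rank_prod']
  exact (linearEquivOfSMulTmul (prodRight R R M N P).toAddEquiv fun c m n => by
    simp [smul_tmul']).rank_eq

theorem subsingleton_of_smul_eq
    (a : R) (c : K) (hc : c ≠ 1) (hM : ∀ m : M, a • m = c • m) (hN : ∀ n : N, a • n = n) :
    Subsingleton (M ⊗[R] N) := by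
  have hfix : ∀ x : M ⊗[R] N, (c - 1) • x = 0 := fun x => by
    induction x using TensorProduct.induction_on with
    | zero => simp
    | tmul m n => rw [sub_smul, one_smul, smul_tmul', ← hM, smul_tmul, hN, sub_self]
    | add x y hx hy => rw [smul_add, hx, hy, add_zero]
  refine subsingleton_of_forall_eq 0 fun x => ?_
  simpa [sub_ne_zero.mpr hc] using hfix x

end

end TensorProduct

theorem AddMonoidAlgebra.mapDomainRingHom_surjective {R M N : Type*} [Semiring R] [AddMonoid M]
    [AddMonoid N] {f : M →+ N} (hf : Function.Surjective f) :
    Function.Surjective (AddMonoidAlgebra.mapDomainRingHom R f) := fun y => by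
  obtain ⟨x, hx⟩ := Finsupp.mapDomain_surjective hf y.coeff
  exact ⟨.ofCoeff x, by ext; simp [hx]⟩

theorem projAdd₁_surjective (n₁ n₂ : ℕ) : Function.Surjective (projAdd₁ n₁ n₂) :=
  fun m => ⟨Fin.append m 0, funext fun i => Fin.append_left m 0 i⟩

theorem projAdd₂_surjective (n₁ n₂ : ℕ) : Function.Surjective (projAdd₂ n₁ n₂) :=
  fun m => ⟨Fin.append 0 m, funext fun i => Fin.append_right 0 m i⟩

theorem projRing₁_surjective (n₁ n₂ : ℕ) : Function.Surjective (projRing₁ n₁ n₂) :=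
  AddMonoidAlgebra.mapDomainRingHom_surjective (projAdd₁_surjective n₁ n₂)

theorem projRing₂_surjective (n₁ n₂ : ℕ) : Function.Surjective (projRing₂ n₁ n₂) :=
  AddMonoidAlgebra.mapDomainRingHom_surjective (projAdd₂_surjective n₁ n₂)

theorem projRing₁_single_natAdd (n₁ n₂ : ℕ) (j : Fin n₂) :
    projRing₁ n₁ n₂ (AddMonoidAlgebra.single (Pi.single (Fin.natAdd n₁ j) 1) 1) = 1 := by
  have h : projAdd₁ n₁ n₂ (Pi.single (Fin.natAdd n₁ j) 1) = 0 :=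
    funext fun i => Pi.single_eq_of_ne (by simp [Fin.ext_iff]; omega) 1
  simp [projRing₁, h, AddMonoidAlgebra.one_def]

theorem projRing₂_single_castAdd (n₁ n₂ : ℕ) (i : Fin n₁) :
    projRing₂ n₁ n₂ (AddMonoidAlgebra.single (Pi.single (Fin.castAdd n₂ i) 1) 1) = 1 := by
  have h : projAdd₂ n₁ n₂ (Pi.single (Fin.castAdd n₂ i) 1) = 0 :=
    funext fun j => Pi.single_eq_of_ne (by simp [Fin.ext_iff]; omega) 1
  simp [projRing₂, h, AddMonoidAlgebra.one_def]

theorem epsHom_single {n : ℕ} (t : Fin n → ℂˣ) (m : Fin n → ℤ) (b : ℂ) :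
    epsHom t (AddMonoidAlgebra.single m b) = b * ∏ i, (t i : ℂ) ^ m i := by
  simp [epsHom, charUnits, AddMonoidAlgebra.lift_single]

theorem epsHom_single_piSingle {n : ℕ} (t : Fin n → ℂˣ) (i : Fin n) :
    epsHom t (AddMonoidAlgebra.single (Pi.single i 1) 1) = t i := by
  rw [epsHom_single, one_mul, Finset.prod_eq_single i (fun j _ hj => by simp [hj]) (by simp)]
  simp

theorem epsHom_addCases_one_right (n₁ n₂ : ℕ) (t₁ : Fin n₁ → ℂˣ) :
    epsHom (Fin.addCases (motive := fun _ => ℂˣ) t₁ (1 : Fin n₂ → ℂˣ)) =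
      (epsHom t₁).comp (projRing₁ n₁ n₂) := by
  apply AddMonoidAlgebra.ringHom_ext
  · intro b
    simp [epsHom_single, projRing₁]
  · intro m
    simp [epsHom_single, projRing₁, Fin.prod_univ_add, projAdd₁]

theorem epsHom_addCases_one_left (n₁ n₂ : ℕ) (t₂ : Fin n₂ → ℂˣ) :
    epsHom (Fin.addCases (motive := fun _ => ℂˣ) (1 : Fin n₁ → ℂˣ) t₂) =
      (epsHom t₂).comp (projRing₂ n₁ n₂) := by
  apply AddMonoidAlgebra.ringHom_ext
  · intro b
    simp [epsHom_single, projRing₂]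
  · intro m
    simp [epsHom_single, projRing₂, Fin.prod_univ_add, projAdd₂]

theorem rank_CV_tensor_eq_of_epsHom_eq_comp {m n : ℕ} (p : Lau m →+* Lau n)
    (hp : Function.Surjective p) {t : Fin m → ℂˣ} {s : Fin n → ℂˣ}
    (h : epsHom t = (epsHom s).comp p) (B : Type) [AddCommGroup B] [Module (Lau m) B]
    [Module (Lau n) B] (hB : ∀ (r : Lau m) (b : B), r • b = p r • b) :
    Module.rank ℂ (TensorProduct (Lau m) (CV m t) B) =
      Module.rank ℂ (TensorProduct (Lau n) (CV n s) B) :=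
  -- `CV m t` and `CV n s` are both `ℂ`, so the identity of `ℂ` identifies them.
  TensorProduct.rank_eq_of_surjective p hp (LinearEquiv.refl ℂ ℂ)
    (fun r x => show epsHom t r • x = epsHom s (p r) • x by rw [h]; rfl) hB

theorem subsingleton_CV_tensor {n : ℕ} {t : Fin n → ℂˣ} {i : Fin n} (hi : t i ≠ 1)
    (B : Type) [AddCommGroup B] [Module (Lau n) B]
    (hB : ∀ b : B, (AddMonoidAlgebra.single (Pi.single i 1) 1 : Lau n) • b = b) :
    Subsingleton (TensorProduct (Lau n) (CV n t) B) :=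
  TensorProduct.subsingleton_of_smul_eq _ (t i : ℂ) (by simpa using hi)
    (fun x => show epsHom t _ • x = _ by rw [epsHom_single_piSingle]) hB

theorem rank_CV_addCases_tensor_left {n₁ n₂ : ℕ} (t₁ : Fin n₁ → ℂˣ) (t₂ : Fin n₂ → ℂˣ)
    (B : Type) [AddCommGroup B] [Module (Lau (n₁ + n₂)) B] [Module (Lau n₁) B]
    (hB : ∀ (r : Lau (n₁ + n₂)) (b : B), r • b = projRing₁ n₁ n₂ r • b) :
    Module.rank ℂ (TensorProduct (Lau (n₁ + n₂))
        (CV (n₁ + n₂) (Fin.addCases (motive := fun _ => ℂˣ) t₁ t₂)) B) =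
      if t₂ = 1 then Module.rank ℂ (TensorProduct (Lau n₁) (CV n₁ t₁) B) else 0 := by
  split_ifs with h₂
  · subst h₂
    exact rank_CV_tensor_eq_of_epsHom_eq_comp _ (projRing₁_surjective n₁ n₂)
      (epsHom_addCases_one_right n₁ n₂ t₁) B hB
  · obtain ⟨j, hj⟩ := Function.ne_iff.mp h₂
    have := subsingleton_CV_tensor (t := Fin.addCases (motive := fun _ => ℂˣ) t₁ t₂)
      (i := Fin.natAdd n₁ j) (by simpa using hj) B
      fun b => by rw [hB, projRing₁_single_natAdd, one_smul]
    exact rank_subsingleton' ℂ _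

theorem rank_CV_addCases_tensor_right {n₁ n₂ : ℕ} (t₁ : Fin n₁ → ℂˣ) (t₂ : Fin n₂ → ℂˣ)
    (B : Type) [AddCommGroup B] [Module (Lau (n₁ + n₂)) B] [Module (Lau n₂) B]
    (hB : ∀ (r : Lau (n₁ + n₂)) (b : B), r • b = projRing₂ n₁ n₂ r • b) :
    Module.rank ℂ (TensorProduct (Lau (n₁ + n₂))
        (CV (n₁ + n₂) (Fin.addCases (motive := fun _ => ℂˣ) t₁ t₂)) B) =
      if t₁ = 1 then Module.rank ℂ (TensorProduct (Lau n₂) (CV n₂ t₂) B) else 0 := by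
  split_ifs with h₁
  · subst h₁
    exact rank_CV_tensor_eq_of_epsHom_eq_comp _ (projRing₂_surjective n₁ n₂)
      (epsHom_addCases_one_left n₁ n₂ t₂) B hB
  · obtain ⟨i, hi⟩ := Function.ne_iff.mp h₁
    have := subsingleton_CV_tensor (t := Fin.addCases (motive := fun _ => ℂˣ) t₁ t₂)
      (i := Fin.castAdd n₂ i) (by simpa using hi) B
      fun b => by rw [hB, projRing₂_single_castAdd, one_smul]
    exact rank_subsingleton' ℂ _

theorem characteristic_variety_product_general (n₁ n₂ : ℕ)
    (B₁ : Type) [AddCommGroup B₁] [Module (Lau n₁) B₁]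
    (B₂ : Type) [AddCommGroup B₂] [Module (Lau n₂) B₂]
    (k : ℕ) (hk : 1 ≤ k)
    (t₁ : Fin n₁ → ℂˣ) (t₂ : Fin n₂ → ℂˣ) (ht : ¬ (t₁ = 1 ∧ t₂ = 1)) :
    letI : Module (Lau (n₁ + n₂)) B₁ := Module.compHom B₁ (projRing₁ n₁ n₂)
    letI : Module (Lau (n₁ + n₂)) B₂ := Module.compHom B₂ (projRing₂ n₁ n₂)
    ((k : Cardinal) ≤ Module.rank ℂ
        (TensorProduct (Lau (n₁ + n₂))
          (CV (n₁ + n₂) (Fin.addCases (motive := fun _ => ℂˣ) t₁ t₂)) (B₁ × B₂)) ↔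
      (t₂ = 1 ∧ (k : Cardinal) ≤ Module.rank ℂ (TensorProduct (Lau n₁) (CV n₁ t₁) B₁)) ∨
      (t₁ = 1 ∧ (k : Cardinal) ≤ Module.rank ℂ (TensorProduct (Lau n₂) (CV n₂ t₂) B₂))) := by
  let : Module (Lau (n₁ + n₂)) B₁ := Module.compHom B₁ (projRing₁ n₁ n₂)
  let : Module (Lau (n₁ + n₂)) B₂ := Module.compHom B₂ (projRing₂ n₁ n₂)
  rw [TensorProduct.rank_prodRight, rank_CV_addCases_tensor_left t₁ t₂ B₁ fun _ _ => rfl,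
    rank_CV_addCases_tensor_right t₁ t₂ B₂ fun _ _ => rfl]
  by_cases h₁ : t₁ = 1 <;> by_cases h₂ : t₂ = 1
  · exact absurd ⟨h₁, h₂⟩ ht
  all_goals simp [h₁, h₂]
  omega

/-- **Product formula for characteristic varieties**:
`V_k(M₁ × M₂) = (V_k(M₁) × 1) ∪ (1 × V_k(M₂))`, stated away from the identity
character. -/
theorem characteristic_variety_product (n₁ n₂ : ℕ) (hn₁ : 1 ≤ n₁) (hn₂ : 1 ≤ n₂)
    (B₁ : Type) [AddCommGroup B₁] [Module (Lau n₁) B₁]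
    (B₂ : Type) [AddCommGroup B₂] [Module (Lau n₂) B₂]
    (k : ℕ) (hk : 1 ≤ k)
    (t₁ : Fin n₁ → ℂˣ) (t₂ : Fin n₂ → ℂˣ) (ht : ¬ (t₁ = 1 ∧ t₂ = 1)) :
    letI : Module (Lau (n₁ + n₂)) B₁ := Module.compHom B₁ (projRing₁ n₁ n₂)
    letI : Module (Lau (n₁ + n₂)) B₂ := Module.compHom B₂ (projRing₂ n₁ n₂)
    ((k : Cardinal) ≤ Module.rank ℂ
        (TensorProduct (Lau (n₁ + n₂))
          (CV (n₁ + n₂) (Fin.addCases (motive := fun _ => ℂˣ) t₁ t₂)) (B₁ × B₂)) ↔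
      (t₂ = 1 ∧ (k : Cardinal) ≤ Module.rank ℂ (TensorProduct (Lau n₁) (CV n₁ t₁) B₁)) ∨
      (t₁ = 1 ∧ (k : Cardinal) ≤ Module.rank ℂ (TensorProduct (Lau n₂) (CV n₂ t₂) B₂))) :=
  characteristic_variety_product_general n₁ n₂ B₁ B₂ k hk t₁ t₂ ht
end
end

section
/- Let n ≥ 1. Let T = {S : Finset (Fin n) | S.card = 3} and P = {S : Finset (Fin n) | S.card = 2}, and let d₃ : (T →₀ Λ_n) → (P →₀ Λ_n) be the Λ_n-linear map defined on basis elements by d₃(e_{{i,j,k}}) = (t_i − 1)·e_{{j,k}} − (t_j − 1)·e_{{i,k}} + (t_k − 1)·e_{{i,j}} for i < j < k. Let B = coker d₃ (the Alexander invariant of the free group F_n, with complex coefficients). Then for every k ≥ 1 and every t : Fin n → ℂˣ: Module.rank ℂ (ℂ_t ⊗[Λ_n] B) ≥ k if and only if (k ≤ n − 1) or (t = 1 and k ≤ n(n−1)/2). Equivalently, V_k(B) = (ℂˣ)ⁿ for 1 ≤ k ≤ n−1, V_k(B) = {1} for n ≤ k ≤ n(n−1)/2, and V_k(B) = ∅ for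 k > n(n−1)/2. -/
noncomputable section

/-- The variable `t_i ∈ Λ_n`: the image of the `i`-th lattice basis vector. -/
def tvar (n : ℕ) (i : Fin n) : Lau n :=
  AddMonoidAlgebra.single (Pi.single i (1 : ℤ)) (1 : ℂ)

/-!
Since tensoring with `ℂ_t` is right exact, `ℂ_t ⊗ B` is the cokernel of the evaluated matrix
`ε_t(d₃)`, which is the Koszul differential `Λ³ℂⁿ → Λ²ℂⁿ` of the vector `a = t - 1`. If `a = 0`
the cokernel is all of `Λ²ℂⁿ`. If `a_p ≠ 0`, the identity `d₃ ∘ d₄ = 0` shows that the image is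
spanned by the `d₃(e_p ∧ e_j ∧ e_k)` with `p ∉ {j, k}`. These are independent, because the one
indexed by `{j, k}` has `e_j ∧ e_k`-coordinate `a_p` while the others vanish there. So the image
has dimension `C(n-1, 2)` and the cokernel `C(n, 2) - C(n-1, 2) = n - 1`.
-/

lemma Nat.sub_one_le_choose_two (n : ℕ) : n - 1 ≤ n.choose 2 := by
  cases n with
  | zero => simp
  | succ m => rw [Nat.choose_succ_succ', Nat.choose_one_right]; omega

namespace Koszul

open Finsupp Module Submodule

abbrev Pair (α : Type*) := {S : Finset α // S.card = 2}

lemma Pair.nonempty {α : Type*} (S : Pair α) : S.1.Nonempty :=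
  Finset.card_pos.mp (by rw [S.2]; norm_num)

variable {α K : Type*} [LinearOrder α] [Field K]

def pair {i j : α} (h : i ≠ j) : Pair α := ⟨{i, j}, Finset.card_pair h⟩

lemma pair_comm {i j : α} (h : i ≠ j) : pair h = pair h.symm :=
  Subtype.ext (Finset.pair_comm i j)

lemma mem_pair_left {i j : α} (h : i ≠ j) : i ∈ (pair h).1 := Finset.mem_insert_self i _

namespace Pair

def fst (S : Pair α) : α := S.1.min' S.nonempty

def snd (S : Pair α) : α := S.1.max' S.nonempty

lemma fst_lt_snd (S : Pair α) : S.fst < S.snd :=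
  Finset.min'_lt_max'_of_card S.1 (by rw [S.2]; norm_num)

lemma fst_mem (S : Pair α) : S.fst ∈ S.1 := Finset.min'_mem _ _

lemma snd_mem (S : Pair α) : S.snd ∈ S.1 := Finset.max'_mem _ _

lemma pair_fst_snd (S : Pair α) : pair S.fst_lt_snd.ne = S := by
  refine Subtype.ext (Finset.eq_of_subset_of_card_le ?_ ?_)
  · simp [pair, Finset.insert_subset_iff, S.fst_mem, S.snd_mem]
  · rw [S.2, (pair S.fst_lt_snd.ne).2]

lemma fst_pair {i j : α} (h : i < j) : (pair h.ne).fst = i := by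
  simp [fst, pair, h.le]

lemma snd_pair {i j : α} (h : i < j) : (pair h.ne).snd = j := by
  simp [snd, pair, h.le]

end Pair

lemma card_triple_of_lt {i j k : α} (hij : i < j) (hjk : j < k) :
    ({i, j, k} : Finset α).card = 3 := by
  rw [Finset.card_insert_of_notMem (by simp [hij.ne, (hij.trans hjk).ne]), Finset.card_pair hjk.ne]

lemma exists_lt_lt_eq_of_card_eq_three {S : Finset α} (h : S.card = 3) :
    ∃ i j k, i < j ∧ j < k ∧ S = {i, j, k} := by
  refine ⟨S.orderEmbOfFin h 0, S.orderEmbOfFin h 1, S.orderEmbOfFin h 2,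
    (S.orderEmbOfFin h).strictMono (by decide), (S.orderEmbOfFin h).strictMono (by decide), ?_⟩
  conv_lhs => rw [← S.image_orderEmbOfFin_univ h]
  simp [Fin.univ_succ, Finset.image_insert]

variable (K) in
/-- `e_i ∧ e_j ∈ Λ² K^α`, in the basis `e_i ∧ e_j` (`i < j`) indexed by two-element subsets. -/
def wedge (i j : α) : Pair α →₀ K :=
  if h : i < j then single (pair h.ne) 1
  else if h : j < i then -single (pair h.ne') 1 else 0

lemma wedge_of_lt {i j : α} (h : i < j) : wedge K i j = single (pair h.ne) 1 := by
  rw [wedge, dif_pos h]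

lemma wedge_swap (i j : α) : wedge K j i = -wedge K i j := by
  rcases lt_trichotomy i j with h | rfl | h
  · rw [wedge, wedge, dif_neg (not_lt_of_gt h), dif_pos h, dif_pos h, pair_comm]
  · simp [wedge]
  · rw [wedge, wedge, dif_pos h, dif_neg (not_lt_of_gt h), dif_pos h, pair_comm, neg_neg]

lemma wedge_self (i : α) : wedge K i i = 0 := by
  simp [wedge]

lemma wedge_apply_of_notMem {i : α} {Q : Pair α} (hi : i ∉ Q.1) (j : α) : wedge K i j Q = 0 := by
  unfold wedge
  split_ifs with h h'
  · rw [single_apply, if_neg]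
    rintro rfl
    exact hi (mem_pair_left _)
  · rw [Finsupp.neg_apply, single_apply, if_neg, neg_zero]
    rintro rfl
    exact hi (mem_pair_left _)
  · rfl

lemma wedge_fst_snd (S : Pair α) : wedge K S.fst S.snd = single S 1 := by
  rw [wedge_of_lt S.fst_lt_snd, S.pair_fst_snd]

/-- The Koszul differential `Λ³ K^α → Λ² K^α` of the vector `a`, applied to `e_i ∧ e_j ∧ e_k`. -/
def koszul (a : α → K) (i j k : α) : Pair α →₀ K :=
  a i • wedge K j k - a j • wedge K i k + a k • wedge K i j

def koszulSpan (a : α → K) : Submodule K (Pair α →₀ K) :=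
  span K {x | ∃ i j k, i < j ∧ j < k ∧ koszul a i j k = x}

variable {a : α → K}

lemma koszul_swap_left (i j k : α) : koszul a j i k = -koszul a i j k := by
  simp only [koszul, wedge_swap i j]
  module

lemma koszul_swap_right (i j k : α) : koszul a i k j = -koszul a i j k := by
  simp only [koszul, wedge_swap j k]
  module

lemma koszul_rotate (i j k : α) : koszul a k i j = koszul a i j k := by
  simp only [koszul, wedge_swap i k, wedge_swap j k]
  module

lemma koszul_self_left (i k : α) : koszul a i i k = 0 := by
  simp only [koszul, wedge_self]
  module

lemma koszul_self_right (i j : α) : koszul a i j j = 0 := by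
  simp only [koszul, wedge_self]
  module

lemma koszul_self_outer (i j : α) : koszul a i j i = 0 := by
  simp only [koszul, wedge_self, wedge_swap j i]
  module

/-- The Koszul complex is a complex: `d₃ ∘ d₄ = 0` on `e_p ∧ e_i ∧ e_j ∧ e_k`. -/
lemma smul_koszul (p i j k : α) :
    a p • koszul a i j k = a i • koszul a p j k - a j • koszul a p i k + a k • koszul a p i j := by
  simp only [koszul]
  module

lemma koszulSpan_zero : koszulSpan (0 : α → K) = ⊥ := by
  rw [koszulSpan, span_eq_bot]
  rintro _ ⟨i, j, k, -, -, rfl⟩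
  simp [koszul]

variable (a) (p : α)

def koszulFamily (S : {S : Pair α // p ∉ S.1}) : Pair α →₀ K :=
  koszul a p S.1.fst S.1.snd

lemma lcomapDomain_koszulFamily (S : {S : Pair α // p ∉ S.1}) :
    lcomapDomain (R := K) Subtype.val Subtype.val_injective (koszulFamily a p S) =
      single S (a p) := by
  ext Q
  have hQ : p ∉ Q.1.1 := Q.2
  simp [koszulFamily, koszul, wedge_fst_snd, wedge_apply_of_notMem hQ, single_apply,
    Subtype.ext_iff]

variable {a p}

lemma linearIndependent_koszulFamily (hp : a p ≠ 0) : LinearIndependent K (koszulFamily a p) :=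
  have hcomp : lcomapDomain (R := K) Subtype.val Subtype.val_injective ∘ koszulFamily a p =
      fun S => single S (a p) :=
    funext (lcomapDomain_koszulFamily a p)
  .of_comp _ (hcomp ▸ linearIndependent_single_of_ne_zero fun _ => hp)

lemma koszul_mem_span_koszulFamily (x y : α) :
    koszul a p x y ∈ span K (Set.range (koszulFamily a p)) := by
  have of_lt : ∀ {x y}, x < y → koszul a p x y ∈ span K (Set.range (koszulFamily a p)) := by
    intro x y h
    by_cases hx : x = p
    · rw [hx, koszul_self_left]; exact zero_mem _
    by_cases hy : y = p
    · rw [hy, koszul_self_outer]; exact zero_mem _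
    refine subset_span ⟨⟨pair h.ne, ?_⟩, ?_⟩
    · simp [pair, Ne.symm hx, Ne.symm hy]
    · simp [koszulFamily, Pair.fst_pair h, Pair.snd_pair h]
  rcases lt_trichotomy x y with h | rfl | h
  · exact of_lt h
  · rw [koszul_self_right]; exact zero_mem _
  · rw [koszul_swap_right]; exact neg_mem (of_lt h)

lemma koszulSpan_eq_span_koszulFamily (hp : a p ≠ 0) :
    koszulSpan a = span K (Set.range (koszulFamily a p)) := by
  apply le_antisymm <;> rw [koszulSpan, span_le]
  · rintro _ ⟨i, j, k, -, -, rfl⟩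
    rw [← inv_smul_smul₀ hp (koszul a i j k), smul_koszul p]
    refine smul_mem _ _ (add_mem (sub_mem ?_ ?_) ?_) <;>
      exact smul_mem _ _ (koszul_mem_span_koszulFamily _ _)
  · rintro _ ⟨⟨S, hpS⟩, rfl⟩
    have hne : ∀ x ∈ S.1, p ≠ x := fun x hx h => hpS (h ▸ hx)
    have hlt := S.fst_lt_snd
    rcases lt_or_gt_of_ne (hne _ S.fst_mem) with h₁ | h₁
    · exact subset_span ⟨p, _, _, h₁, hlt, rfl⟩
    rcases lt_or_gt_of_ne (hne _ S.snd_mem) with h₂ | h₂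
    · rw [koszulFamily, ← neg_neg (koszul a p _ _), ← koszul_swap_left]
      exact neg_mem (subset_span ⟨_, p, _, h₁, h₂, rfl⟩)
    · rw [koszulFamily, koszul_rotate]
      exact subset_span ⟨_, _, p, hlt, h₂, rfl⟩

variable [Fintype α]

lemma card_pair_notMem (p : α) :
    Fintype.card {S : Pair α // p ∉ S.1} = (Fintype.card α - 1).choose 2 := by
  classical
  rw [Fintype.card_congr (Equiv.subtypeSubtypeEquivSubtypeInter _ (fun S => p ∉ S)),
    Fintype.card_subtype]
  have : ({S | S.card = 2 ∧ p ∉ S} : Finset (Finset α)) = (Finset.univ.erase p).powersetCard 2 := by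
    ext S
    simp [Finset.mem_powersetCard, Finset.subset_erase, and_comm]
  rw [this, Finset.card_powersetCard, Finset.card_erase_of_mem (Finset.mem_univ p),
    Finset.card_univ]

lemma finrank_koszulSpan (hp : a p ≠ 0) :
    finrank K (koszulSpan a) = (Fintype.card α - 1).choose 2 := by
  rw [koszulSpan_eq_span_koszulFamily hp, finrank_span_eq_card (linearIndependent_koszulFamily hp),
    card_pair_notMem]

theorem finrank_quotient_koszulSpan_zero :
    finrank K ((Pair α →₀ K) ⧸ koszulSpan (0 : α → K)) = (Fintype.card α).choose 2 := by
  rw [koszulSpan_zero, (quotEquivOfEqBot ⊥ rfl).finrank_eq, finrank_finsupp_self,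
    Fintype.card_finset_len]

theorem finrank_quotient_koszulSpan (ha : a ≠ 0) :
    finrank K ((Pair α →₀ K) ⧸ koszulSpan a) = Fintype.card α - 1 := by
  obtain ⟨p, hp⟩ : ∃ p, a p ≠ 0 := Function.ne_iff.mp ha
  have hsum := (koszulSpan a).finrank_quotient_add_finrank
  rw [finrank_koszulSpan hp, finrank_finsupp_self, Fintype.card_finset_len] at hsum
  obtain ⟨m, hm⟩ := Nat.exists_eq_add_one_of_ne_zero (Fintype.card_pos_iff.mpr ⟨p⟩).ne'
  have hchoose : (m + 1).choose 2 = m.choose 2 + m := by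
    rw [Nat.choose_succ_succ', Nat.choose_one_right, add_comm]
  rw [hm, Nat.add_sub_cancel, hchoose] at hsum
  rw [hm, Nat.add_sub_cancel]
  omega

end Koszul

open TensorProduct in
lemma rank_tensor_quotient_range {R K M F G : Type*} [CommRing R] [Field K] [Algebra K R]
    [AddCommGroup M] [Module R M] [Module K M] [IsScalarTower K R M] [SMulCommClass R K M]
    [AddCommGroup F] [Module R F] [AddCommGroup G] [Module R G] (d : F →ₗ[R] G) :
    Module.rank K (M ⊗[R] (G ⧸ LinearMap.range d)) =
      Module.rank K ((M ⊗[R] G) ⧸ LinearMap.range (d.lTensor M)) :=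
  ((lTensor.equiv M (LinearMap.exact_map_mkQ_range d) (Submodule.mkQ_surjective _)).restrictScalars
    K).rank_eq.symm

section Evaluation

open Finsupp TensorProduct Koszul

variable {n : ℕ} (t : Fin n → ℂˣ)

lemma epsHom_algebraMap (c : ℂ) : epsHom t (algebraMap ℂ (Lau n) c) = c :=
  AlgHom.commutes _ c

lemma epsHom_tvar (i : Fin n) : epsHom t (tvar n i) = t i := by
  simp [epsHom, tvar, AddMonoidAlgebra.lift_single, charUnits, Pi.single_apply]

lemma CV.smul_def (r : Lau n) (x : CV n t) : r • x = epsHom t r • x := rfl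

instance : IsScalarTower ℂ (Lau n) (CV n t) where
  smul_assoc c r x := by
    rw [CV.smul_def, CV.smul_def, Algebra.smul_def, map_mul, epsHom_algebraMap, mul_smul]

def CV.equivSelf : CV n t ≃ₗ[ℂ] ℂ := LinearEquiv.refl ℂ ℂ

lemma CV.equivSelf_smul (r : Lau n) (c : CV n t) :
    CV.equivSelf t (r • c) = epsHom t r * CV.equivSelf t c := rfl

lemma mapRange_epsHom_smul_single {κ : Type*} (r : Lau n) (i : κ) :
    mapRange.addMonoidHom (epsHom t).toAddMonoidHom (r • single i 1) = epsHom t r • single i 1 := by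
  simp [smul_single]

variable {ι κ : Type*} [DecidableEq ι] [DecidableEq κ]

variable (κ) in
def tensorFinsuppEquiv :
    CV n t ⊗[Lau n] (κ →₀ Lau n) ≃ₗ[ℂ] (κ →₀ ℂ) :=
  (finsuppScalarRight (Lau n) (Lau n) (CV n t) κ).restrictScalars ℂ ≪≫ₗ
    mapRange.linearEquiv (CV.equivSelf t)

lemma tensorFinsuppEquiv_tmul (c : CV n t) (x : κ →₀ Lau n) :
    tensorFinsuppEquiv t κ (c ⊗ₜ x) =
      CV.equivSelf t c • mapRange.addMonoidHom (epsHom t).toAddMonoidHom x := by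
  ext k
  simp [tensorFinsuppEquiv, CV.equivSelf_smul, mul_comm]

lemma tensorFinsuppEquiv_symm_single (i : κ) (c : ℂ) :
    (tensorFinsuppEquiv t κ).symm (single i c) = (CV.equivSelf t).symm c ⊗ₜ single i 1 := by
  simp [tensorFinsuppEquiv]

theorem CV.rank_tensor_quotient_range (d : (ι →₀ Lau n) →ₗ[Lau n] (κ →₀ Lau n)) :
    Module.rank ℂ (CV n t ⊗[Lau n] ((κ →₀ Lau n) ⧸ LinearMap.range d)) =
      Module.rank ℂ ((κ →₀ ℂ) ⧸ Submodule.span ℂ (Set.range fun i =>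
        mapRange.addMonoidHom (epsHom t).toAddMonoidHom (d (single i 1)))) := by
  let D : (ι →₀ ℂ) →ₗ[ℂ] (κ →₀ ℂ) := (tensorFinsuppEquiv t κ).toLinearMap ∘ₗ
    (d.lTensor (CV n t)).restrictScalars ℂ ∘ₗ (tensorFinsuppEquiv t ι).symm.toLinearMap
  have hD : D = linearCombination ℂ fun i =>
      mapRange.addMonoidHom (epsHom t).toAddMonoidHom (d (single i 1)) := by
    refine Finsupp.lhom_ext fun i c => ?_
    simp [D, tensorFinsuppEquiv_symm_single, tensorFinsuppEquiv_tmul]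
  have hrange : ((LinearMap.range (d.lTensor (CV n t))).restrictScalars ℂ).map
      (tensorFinsuppEquiv t κ).toLinearMap = LinearMap.range D := by
    rw [LinearMap.range_comp, LinearMap.range_comp_of_range_eq_top _ (LinearEquiv.range _)]
    rfl
  rw [_root_.rank_tensor_quotient_range, ← (Submodule.Quotient.restrictScalarsEquiv ℂ _).rank_eq,
    (Submodule.Quotient.equiv _ _ _ hrange).rank_eq, hD, range_linearCombination]

lemma span_epsHom_eq_koszulSpan
    {d : ({S : Finset (Fin n) // S.card = 3} →₀ Lau n) →ₗ[Lau n] (Pair (Fin n) →₀ Lau n)}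
    (hd : ∀ {i j k : Fin n} (hij : i < j) (hjk : j < k),
      d (single ⟨{i, j, k}, card_triple_of_lt hij hjk⟩ 1) =
        (tvar n i - 1) • single (pair hjk.ne) 1
          - (tvar n j - 1) • single (pair (hij.trans hjk).ne) 1
          + (tvar n k - 1) • single (pair hij.ne) 1) :
    Submodule.span ℂ (Set.range fun S => mapRange.addMonoidHom (epsHom t).toAddMonoidHom
        (d (single S 1))) = koszulSpan fun i => (t i : ℂ) - 1 := by
  have heval : ∀ {i j k : Fin n} (hij : i < j) (hjk : j < k),
      mapRange.addMonoidHom (epsHom t).toAddMonoidHom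
        (d (single ⟨{i, j, k}, card_triple_of_lt hij hjk⟩ 1)) =
        koszul (fun i => (t i : ℂ) - 1) i j k := by
    intro i j k hij hjk
    rw [hd hij hjk, map_add, map_sub, mapRange_epsHom_smul_single, mapRange_epsHom_smul_single,
      mapRange_epsHom_smul_single, koszul, wedge_of_lt hjk,
      wedge_of_lt (hij.trans hjk), wedge_of_lt hij]
    simp only [map_sub, map_one, epsHom_tvar]
  rw [koszulSpan]
  congr 1
  ext x
  constructor
  · rintro ⟨⟨S, hS⟩, rfl⟩
    obtain ⟨i, j, k, hij, hjk, rfl⟩ := exists_lt_lt_eq_of_card_eq_three hS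
    exact ⟨i, j, k, hij, hjk, (heval hij hjk).symm⟩
  · rintro ⟨i, j, k, hij, hjk, rfl⟩
    exact ⟨_, heval hij hjk⟩

end Evaluation

theorem characteristic_varieties_free_group_general (n : ℕ)
    (d : ({S : Finset (Fin n) // S.card = 3} →₀ Lau n) →ₗ[Lau n]
         ({S : Finset (Fin n) // S.card = 2} →₀ Lau n))
    (hd : ∀ i j k : Fin n, i < j → j < k →
      ∀ (h3 : ({i, j, k} : Finset (Fin n)).card = 3)
        (hjk : ({j, k} : Finset (Fin n)).card = 2)
        (hik : ({i, k} : Finset (Fin n)).card = 2)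
        (hij : ({i, j} : Finset (Fin n)).card = 2),
        d (Finsupp.single ⟨{i, j, k}, h3⟩ 1) =
          (tvar n i - 1) • Finsupp.single ⟨{j, k}, hjk⟩ 1
          - (tvar n j - 1) • Finsupp.single ⟨{i, k}, hik⟩ 1
          + (tvar n k - 1) • Finsupp.single ⟨{i, j}, hij⟩ 1)
    (k : ℕ) (t : Fin n → ℂˣ) :
    (k : Cardinal) ≤ Module.rank ℂ
        (TensorProduct (Lau n) (CV n t)
          (({S : Finset (Fin n) // S.card = 2} →₀ Lau n) ⧸ LinearMap.range d)) ↔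
      (k ≤ n - 1 ∨ (t = 1 ∧ k ≤ n * (n - 1) / 2)) := by
  rw [CV.rank_tensor_quotient_range,
    span_epsHom_eq_koszulSpan t fun hij hjk => hd _ _ _ hij hjk _ _ _ _, ← Module.finrank_eq_rank,
    Nat.cast_le]
  by_cases ht : t = 1
  · subst ht
    have ha : (fun i => ((1 : Fin n → ℂˣ) i : ℂ) - 1) = 0 := by
      ext
      simp
    rw [ha, Koszul.finrank_quotient_koszulSpan_zero, Fintype.card_fin, ← Nat.choose_two_right]
    have := Nat.sub_one_le_choose_two n
    simp only [true_and]
    omega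
  · have ha : (fun i => (t i : ℂ) - 1) ≠ 0 := fun h =>
      ht (funext fun i => Units.ext (sub_eq_zero.mp (congrFun h i)))
    rw [Koszul.finrank_quotient_koszulSpan ha, Fintype.card_fin]
    simp [ht]

/-- **Characteristic varieties of the free group `F_n`**: with `B = coker d₃`
the Alexander invariant of `F_n`, one has `V_k(B) = (ℂˣ)ⁿ` for `1 ≤ k ≤ n-1`,
`V_k(B) = {1}` for `n ≤ k ≤ n(n-1)/2`, and `V_k(B) = ∅` for `k > n(n-1)/2`. -/
theorem characteristic_varieties_free_group (n : ℕ) (hn : 1 ≤ n)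
    (d : ({S : Finset (Fin n) // S.card = 3} →₀ Lau n) →ₗ[Lau n]
         ({S : Finset (Fin n) // S.card = 2} →₀ Lau n))
    (hd : ∀ i j k : Fin n, i < j → j < k →
      ∀ (h3 : ({i, j, k} : Finset (Fin n)).card = 3)
        (hjk : ({j, k} : Finset (Fin n)).card = 2)
        (hik : ({i, k} : Finset (Fin n)).card = 2)
        (hij : ({i, j} : Finset (Fin n)).card = 2),
        d (Finsupp.single ⟨{i, j, k}, h3⟩ 1) =
          (tvar n i - 1) • Finsupp.single ⟨{j, k}, hjk⟩ 1
          - (tvar n j - 1) • Finsupp.single ⟨{i, k}, hik⟩ 1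
          + (tvar n k - 1) • Finsupp.single ⟨{i, j}, hij⟩ 1)
    (k : ℕ) (hk : 1 ≤ k) (t : Fin n → ℂˣ) :
    (k : Cardinal) ≤ Module.rank ℂ
        (TensorProduct (Lau n) (CV n t)
          (({S : Finset (Fin n) // S.card = 2} →₀ Lau n) ⧸ LinearMap.range d)) ↔
      (k ≤ n - 1 ∨ (t = 1 ∧ k ≤ n * (n - 1) / 2)) :=
  characteristic_varieties_free_group_general n d hd k t
end
end
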